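/- arXiv:1506.02246 — 9 statements merged into one kernel-verified Lean document; each statement's English description precedes it below -/
import Mathlib

section
/- For every infinite binary word u ∈ Σ^∞ and every n ≥ 1, f_α^n(κ(u)) = κ(u ⊕ n), where ⊕ is the adding machine (odometer) map on Σ^∞. -/
/-- `κ(w) = (1-α)·Σ_{i≥1} w_i α^{i-1}` (0-based indexing). -/
noncomputable def kinf (α : ℝ) (u : ℕ → Bool) : ℝ :=
  (1 - α) * ∑' i : ℕ, (if u i then α ^ i else 0)

/-- The adding machine (odometer) on `Σ^∞`: add `1` with carry propagating to the right;
bit `n` is flipped iff all earlier bits equal `1`. -/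
def odo (u : ℕ → Bool) : ℕ → Bool :=
  fun n => if ∀ i < n, u i = true then !u n else u n

/-- The Delahaye-type map `f_α` on `[0,1]`.  For `x ∈ [1-α^{j-1}, 1-α^j)` the index `j ≥ 1`
is recovered as `j = sInf {n | x < 1 - α^n}`. -/
noncomputable def fDel (α : ℝ) (x : ℝ) : ℝ :=
  if x = 1 then 0
  else
    let j := sInf {n : ℕ | x < 1 - α ^ n}
    if x ≤ 1 - α ^ (j - 1) + α ^ j then x - 1 + 2 * α ^ (j - 1) - α ^ j
    else (1 - α + α ^ 2) / (2 * α - 1) * (x - 1) + α ^ (j + 1) * (2 - α) / (2 * α - 1)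

lemma summ_if {α : ℝ} (h0 : 0 ≤ α) (h1 : α < 1) (v : ℕ → Bool) :
    Summable (fun i : ℕ => if v i then α ^ i else 0) := by
  apply Summable.of_nonneg_of_le (fun i => ?_) (fun i => ?_)
    (summable_geometric_of_lt_one h0 h1)
  · split <;> positivity
  · split
    · exact le_rfl
    · positivity

lemma key {α : ℝ} (hα1 : 0 < α) (hα2 : α < 1 / 2) (u : ℕ → Bool) :
    fDel α (kinf α u) = kinf α (odo u) := by
  have h0 : (0:ℝ) ≤ α := hα1.le
  have h1 : α < 1 := by linarith
  have hne1 : α ≠ 1 := ne_of_lt h1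
  by_cases hall : ∀ i, u i = true
  · have hx : kinf α u = 1 := by
      unfold kinf
      have : (fun i : ℕ => if u i then α ^ i else 0) = fun i : ℕ => α ^ i := by
        funext i; simp [hall i]
      rw [this, tsum_geometric_of_lt_one h0 h1]
      rw [mul_inv_cancel₀ (by linarith : (1:ℝ) - α ≠ 0)]
    have hodo : odo u = fun _ => false := by
      funext n; simp [odo, hall]
    rw [hx, hodo]
    simp [fDel, kinf]
  · push_neg at hall
    have hex : ∃ j, u j = false := by
      obtain ⟨j, hj⟩ := hall; exact ⟨j, by simpa using hj⟩
    obtain ⟨j, hj, hlt⟩ : ∃ j, u j = false ∧ ∀ i < j, u i = true :=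
      ⟨Nat.find hex, Nat.find_spec hex, fun i hi => by simpa using Nat.find_min hex hi⟩
    set T : ℝ := ∑' i : ℕ, (if u (i + (j+1)) then α ^ (i + (j+1)) else 0) with hTdef
    have hsu := summ_if h0 h1 u
    have hsT : Summable (fun i : ℕ => if u (i + (j+1)) then α ^ (i + (j+1)) else 0) :=
      (summable_nat_add_iff (f := fun i : ℕ => if u i then α ^ i else 0) (j+1)).2 hsu
    have hgs : Summable (fun i : ℕ => α ^ (i + (j+1))) :=
      (summable_nat_add_iff (f := fun i : ℕ => α ^ i) (j+1)).2 (summable_geometric_of_lt_one h0 h1)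
    have hT0 : 0 ≤ T := tsum_nonneg (fun i => by split <;> positivity)
    have hTle : T ≤ α ^ (j+1) * (1 - α)⁻¹ := by
      have h2 : T ≤ ∑' i : ℕ, α ^ (i + (j+1)) := by
        apply Summable.tsum_le_tsum _ hsT hgs
        intro i; split
        · exact le_rfl
        · positivity
      have h3 : ∑' i : ℕ, α ^ (i + (j+1)) = α ^ (j+1) * (1 - α)⁻¹ := by
        simp_rw [pow_add]
        rw [tsum_mul_right, tsum_geometric_of_lt_one h0 h1]
        ring
      linarith [h2, h3.le, h3.ge]
    set S : ℝ := (1 - α) * T with hSdef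
    have hS0 : 0 ≤ S := mul_nonneg (by linarith) hT0
    have hS2 : S ≤ α ^ (j+1) := by
      have : (1 - α) * T ≤ (1 - α) * (α ^ (j+1) * (1 - α)⁻¹) :=
        mul_le_mul_of_nonneg_left hTle (by linarith)
      rw [hSdef]
      calc (1 - α) * T ≤ (1 - α) * (α ^ (j+1) * (1 - α)⁻¹) := this
        _ = α ^ (j+1) := by
          rw [mul_comm ((1:ℝ) - α), mul_assoc, inv_mul_cancel₀ (by linarith : (1:ℝ) - α ≠ 0), mul_one]
    have hpj : 0 < α ^ j := pow_pos hα1 j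
    have hpj1 : 0 < α ^ (j+1) := pow_pos hα1 (j+1)
    have hpow : α ^ (j+1) = α * α ^ j := by ring
    have h2a : 2 * α ^ (j+1) < α ^ j := by
      rw [hpow]; nlinarith
    -- value of kinf α u
    have hxval : kinf α u = 1 - α ^ j + S := by
      unfold kinf
      rw [← Summable.sum_add_tsum_nat_add (j+1) hsu]
      have hfin : ∑ i ∈ Finset.range (j+1), (if u i then α ^ i else 0)
          = ∑ i ∈ Finset.range j, α ^ i := by
        rw [Finset.sum_range_succ, hj]
        simp only [Bool.false_eq_true, if_false, add_zero]
        exact Finset.sum_congr rfl fun i hi => by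
          rw [hlt i (Finset.mem_range.mp hi)]; simp
      rw [hfin, geom_sum_eq hne1, ← hTdef]
      have h9 : α - 1 ≠ 0 := sub_ne_zero.mpr hne1
      rw [hSdef]
      field_simp
      ring
    set x : ℝ := kinf α u with hxdef
    have hxle : x ≤ 1 - α ^ j + α ^ (j+1) := by rw [hxval]; linarith
    have hxge : 1 - α ^ j ≤ x := by rw [hxval]; linarith
    have hxne : x ≠ 1 := by
      have : x < 1 := by
        have : α ^ (j+1) < α ^ j := by rw [hpow]; nlinarith
        linarith
      exact ne_of_lt this
    have hmem : x < 1 - α ^ (j+1) := by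
      rw [hxval]
      have : S < α ^ j - α ^ (j+1) := by linarith
      linarith
    have hsinf : sInf {n : ℕ | x < 1 - α ^ n} = j + 1 := by
      apply le_antisymm (Nat.sInf_le hmem)
      by_contra hc
      push_neg at hc
      have hmem' : sInf {n : ℕ | x < 1 - α ^ n} ∈ {n : ℕ | x < 1 - α ^ n} :=
        Nat.sInf_mem ⟨j+1, hmem⟩
      set m := sInf {n : ℕ | x < 1 - α ^ n}
      have hmj : m ≤ j := Nat.lt_succ_iff.mp hc
      have : α ^ j ≤ α ^ m := pow_le_pow_of_le_one h0 h1.le hmj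
      have : x < 1 - α ^ j := by
        have := hmem'
        simp only [Set.mem_setOf_eq] at this
        linarith
      linarith
    -- compute fDel
    have hfdel : fDel α x = x - 1 + 2 * α ^ j - α ^ (j+1) := by
      rw [fDel, if_neg hxne]
      simp only [hsinf]
      rw [if_pos]
      · simp
      · simp only [Nat.add_sub_cancel]
        linarith [hxle]
    -- compute kinf α (odo u)
    have hodoval : kinf α (odo u) = (1 - α) * α ^ j + S := by
      unfold kinf
      have hso := summ_if h0 h1 (odo u)
      rw [← Summable.sum_add_tsum_nat_add (j+1) hso]
      have hfin : ∑ i ∈ Finset.range (j+1), (if odo u i then α ^ i else 0) = α ^ j := by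
        rw [Finset.sum_range_succ]
        have h4 : odo u j = true := by
          simp only [odo, if_pos hlt, hj]; rfl
        rw [h4, if_pos rfl]
        have h5 : ∑ i ∈ Finset.range j, (if odo u i then α ^ i else 0) = 0 := by
          apply Finset.sum_eq_zero
          intro i hi
          have hij : i < j := Finset.mem_range.mp hi
          have h6 : odo u i = false := by
            have hcond : ∀ k < i, u k = true := fun k hk => hlt k (hk.trans hij)
            simp only [odo, if_pos hcond, hlt i hij]; rfl
          rw [h6]; simp
        rw [h5, zero_add]
      have htail : ∀ i : ℕ, odo u (i + (j+1)) = u (i + (j+1)) := by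
        intro i
        have : ¬ (∀ k < i + (j+1), u k = true) := by
          intro hcon
          have := hcon j (by omega)
          rw [hj] at this; exact absurd this (by simp)
        simp only [odo, if_neg this]
      have h7 : ∑' i : ℕ, (if odo u (i + (j+1)) then α ^ (i + (j+1)) else 0) = T := by
        rw [hTdef]
        congr 1; funext i; rw [htail i]
      rw [hfin, h7, hSdef]
      ring
    rw [hfdel, hodoval, hxval]
    ring

/-- For every `u ∈ Σ^∞` and `n ≥ 1`, `f_α^n(κ(u)) = κ(u ⊕ n)`. -/
theorem stmt5 (α : ℝ) (hα1 : 0 < α) (hα2 : α < 1 / 2) (u : ℕ → Bool) (n : ℕ) (hn : 1 ≤ n) :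
    (fDel α)^[n] (kinf α u) = kinf α (odo^[n] u) := by
  clear hn
  induction n with
  | zero => simp
  | succ k ih =>
    rw [Function.iterate_succ_apply', Function.iterate_succ_apply', ih, key hα1 hα2]
end

section
/- The restriction of f_α to X = ∩_{k≥1} ∪_{u∈Σ^k} [κ(u), κ(u) + α^k] is topologically conjugate to the adding machine (Σ^∞, ⊕1), via the conjugacy κ. In particular, κ is a homeomorphism from Σ^∞ (with the metric d(u,v) = max({0} ∪ {1/2^i : u_i ≠ v_i})) onto X. -/
noncomputable def kfin (α : ℝ) {k : ℕ} (u : Fin k → Bool) : ℝ :=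
  (1 - α) * ∑ i : Fin k, (if u i then α ^ (i : ℕ) else 0)

/-- `X = ∩_{k≥1} ∪_{u∈Σ^k} [κ(u), κ(u)+α^k]`. -/
def Xinf (α : ℝ) : Set ℝ :=
  ⋂ k ∈ {k : ℕ | 1 ≤ k}, ⋃ u : Fin k → Bool, Set.Icc (kfin α u) (kfin α u + α ^ k)

/-- The metric `d(u,v) = max({0} ∪ {1/2^i : u_i ≠ v_i})` on `Σ^∞` (1-based exponents). -/
noncomputable def dCantor (u v : ℕ → Bool) : ℝ :=
  sSup (insert 0 {r : ℝ | ∃ i : ℕ, u i ≠ v i ∧ r = (1 / 2) ^ (i + 1)})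

/-!
For a word `w` of length `k`, `κ` maps the sequences beginning with `w` into the interval `I(w)` of
length `α^k`, and `I(w0)`, `I(w1)` are the two ends of `I(w)`, separated by a gap of length
`(1 - 2α) α^k > 0`. So points of `X` have unique addresses, and `κ` is bi-uniformly continuous:
sequences agreeing below `k` have images within `α^k`, while sequences first differing at `m` have
images at least `(1 - 2α) α^m` apart. If `u` starts with `j` ones followed by a zero, then `κ u`
lies in `[1 - α^j, 1 - α^j + α^(j+1)]`, where `f_α` is a translation carrying the prefix `1^j 0`
to `0^j 1` and leaving the tail alone; this is the carry of the adding machine.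
-/

noncomputable def kpart (α : ℝ) (u : ℕ → Bool) (k : ℕ) : ℝ :=
  (1 - α) * ∑ i ∈ Finset.range k, (if u i then α ^ i else 0)

/-- The interval `I(u₀ ⋯ u_{k-1})` of the paper. -/
def cylIcc (α : ℝ) (u : ℕ → Bool) (k : ℕ) : Set ℝ :=
  Set.Icc (kpart α u k) (kpart α u k + α ^ k)

lemma exists_first_ne {β : Type*} {u v : ℕ → β} {i : ℕ} (h : u i ≠ v i) :
    ∃ m ≤ i, (∀ j < m, u j = v j) ∧ u m ≠ v m := by
  classical
  have hex : ∃ i, u i ≠ v i := ⟨i, h⟩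
  exact ⟨Nat.find hex, Nat.find_min' hex h, fun j hj => not_not.1 (Nat.find_min hex hj),
    Nat.find_spec hex⟩

section Kappa

variable {α : ℝ}

lemma kpart_zero (u : ℕ → Bool) : kpart α u 0 = 0 := by
  simp [kpart]

lemma kpart_succ (u : ℕ → Bool) (k : ℕ) :
    kpart α u (k + 1) = kpart α u k + (1 - α) * (if u k then α ^ k else 0) := by
  rw [kpart, kpart, Finset.sum_range_succ, mul_add]

lemma kpart_congr {u v : ℕ → Bool} {k : ℕ} (h : ∀ i < k, u i = v i) :
    kpart α u k = kpart α v k := by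
  unfold kpart
  congr 1
  exact Finset.sum_congr rfl fun i hi => by rw [h i (Finset.mem_range.1 hi)]

lemma cylIcc_congr {u v : ℕ → Bool} {k : ℕ} (h : ∀ i < k, u i = v i) :
    cylIcc α u k = cylIcc α v k := by
  rw [cylIcc, cylIcc, kpart_congr h]

lemma kpart_of_forall_true {u : ℕ → Bool} {k : ℕ} (h : ∀ i < k, u i = true) :
    kpart α u k = 1 - α ^ k := by
  induction k with
  | zero => simp [kpart_zero]
  | succ k ih =>
    rw [kpart_succ, ih fun i hi => h i (by omega), h k (by omega)]
    simp only [if_true]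
    ring

lemma kpart_of_forall_false {u : ℕ → Bool} {k : ℕ} (h : ∀ i < k, u i = false) :
    kpart α u k = 0 := by
  induction k with
  | zero => exact kpart_zero u
  | succ k ih => simp [kpart_succ, ih fun i hi => h i (by omega), h k (by omega)]

lemma kfin_eq_kpart {k : ℕ} (u : ℕ → Bool) : kfin α (fun i : Fin k => u i) = kpart α u k := by
  rw [kfin, kpart, Fin.sum_univ_eq_sum_range (fun n => if u n then α ^ n else 0) k]

lemma mem_Xinf_iff {x : ℝ} : x ∈ Xinf α ↔ ∀ k, 1 ≤ k → ∃ u : ℕ → Bool, x ∈ cylIcc α u k := by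
  simp only [Xinf, Set.mem_iInter, Set.mem_iUnion]
  refine forall₂_congr fun k _ => ⟨fun ⟨w, hw⟩ => ?_, fun ⟨u, hu⟩ => ⟨fun i => u i, ?_⟩⟩
  · refine ⟨fun n => if h : n < k then w ⟨n, h⟩ else false, ?_⟩
    rw [cylIcc, ← kfin_eq_kpart]
    simpa using hw
  · rwa [kfin_eq_kpart]

lemma cylIcc_succ_subset (h0 : 0 ≤ α) (h1 : α ≤ 1) (u : ℕ → Bool) (k : ℕ) :
    cylIcc α u (k + 1) ⊆ cylIcc α u k := by
  have hd0 : 0 ≤ (1 - α) * (if u k then α ^ k else 0) := by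
    apply mul_nonneg (by linarith)
    split_ifs <;> positivity
  have hd1 : (1 - α) * (if u k then α ^ k else 0) ≤ (1 - α) * α ^ k := by
    apply mul_le_mul_of_nonneg_left _ (by linarith)
    split_ifs <;> first | rfl | positivity
  apply Set.Icc_subset_Icc <;> rw [kpart_succ]
  · linarith
  · rw [pow_succ]
    linarith

lemma cylIcc_antitone (h0 : 0 ≤ α) (h1 : α ≤ 1) (u : ℕ → Bool) : Antitone (cylIcc α u) :=
  antitone_nat_of_succ_le (cylIcc_succ_subset h0 h1 u)

lemma abs_sub_le_of_mem_cylIcc {u : ℕ → Bool} {k : ℕ} {x y : ℝ} (hx : x ∈ cylIcc α u k)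
    (hy : y ∈ cylIcc α u k) : |x - y| ≤ α ^ k :=
  abs_sub_le_iff.2 ⟨by linarith [hx.2, hy.1], by linarith [hx.1, hy.2]⟩

/-- The gap between `I(w0)` and `I(w1)` has length `(1 - α) α^m - α^(m+1)`. -/
lemma pow_mul_le_abs_sub_of_mem_cylIcc (h0 : 0 ≤ α) (h1 : α ≤ 1) {u v : ℕ → Bool} {m k : ℕ}
    (hmk : m < k) (hagree : ∀ i < m, u i = v i) (hne : u m ≠ v m) {x y : ℝ}
    (hx : x ∈ cylIcc α u k) (hy : y ∈ cylIcc α v k) : (1 - 2 * α) * α ^ m ≤ |x - y| := by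
  wlog hu : u m = false generalizing u v x y
  · rw [abs_sub_comm]
    refine this (fun i hi => (hagree i hi).symm) hne.symm hy hx ?_
    cases h : v m <;> simp_all
  have hv : v m = true := by cases h : v m <;> simp_all
  have hx' := cylIcc_antitone h0 h1 u hmk hx
  have hy' := cylIcc_antitone h0 h1 v hmk hy
  simp only [cylIcc, kpart_succ, hu, hv, kpart_congr hagree, Set.mem_Icc, Bool.false_eq_true,
    if_false, if_true, mul_zero, add_zero, pow_succ] at hx' hy'
  rw [le_abs]
  right
  linarith [hx'.2, hy'.1]

lemma eqOn_of_mem_cylIcc (h0 : 0 < α) (h1 : α < 1 / 2) {u v : ℕ → Bool} {k : ℕ} {x : ℝ}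
    (hu : x ∈ cylIcc α u k) (hv : x ∈ cylIcc α v k) : ∀ i < k, u i = v i := by
  by_contra! ⟨i, hik, hi⟩
  obtain ⟨m, hmi, hagree, hne⟩ := exists_first_ne hi
  have := pow_mul_le_abs_sub_of_mem_cylIcc h0.le (by linarith) (hmi.trans_lt hik) hagree hne hu hv
  rw [sub_self, abs_zero] at this
  nlinarith [pow_pos h0 m]

lemma kinf_summable (h0 : 0 ≤ α) (h1 : α < 1) (u : ℕ → Bool) :
    Summable (fun i => if u i then α ^ i else 0) :=
  (summable_geometric_of_lt_one h0 h1).of_nonneg_of_le (fun i => by split_ifs <;> positivity)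
    (fun i => by split_ifs <;> first | rfl | positivity)

lemma kinf_nonneg (h0 : 0 ≤ α) (h1 : α < 1) (u : ℕ → Bool) : 0 ≤ kinf α u :=
  mul_nonneg (by linarith) (tsum_nonneg fun i => by split_ifs <;> positivity)

lemma kinf_le_one (h0 : 0 ≤ α) (h1 : α < 1) (u : ℕ → Bool) : kinf α u ≤ 1 := by
  have hle : ∑' i, (if u i then α ^ i else 0) ≤ ∑' i : ℕ, α ^ i :=
    (kinf_summable h0 h1 u).tsum_le_tsum (fun i => by split_ifs <;> first | rfl | positivity)
      (summable_geometric_of_lt_one h0 h1)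
  rw [tsum_geometric_of_lt_one h0 h1] at hle
  calc kinf α u ≤ (1 - α) * (1 - α)⁻¹ := mul_le_mul_of_nonneg_left hle (by linarith)
    _ = 1 := mul_inv_cancel₀ (by linarith)

lemma kinf_of_forall_true (h0 : 0 ≤ α) (h1 : α < 1) {u : ℕ → Bool} (h : ∀ i, u i = true) :
    kinf α u = 1 := by
  simp only [kinf, h, if_true]
  rw [tsum_geometric_of_lt_one h0 h1, mul_inv_cancel₀ (by linarith)]

lemma kinf_const_false : kinf α (fun _ => false) = 0 := by
  simp [kinf]

lemma kinf_eq_kpart_add (h0 : 0 ≤ α) (h1 : α < 1) (u : ℕ → Bool) (k : ℕ) :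
    kinf α u = kpart α u k + α ^ k * kinf α (fun i => u (i + k)) := by
  have htail : ∑' i, (if u (i + k) then α ^ (i + k) else 0)
      = α ^ k * ∑' i, (if u (i + k) then α ^ i else 0) := by
    rw [← tsum_mul_left]
    exact tsum_congr fun i => by split_ifs <;> ring
  rw [kinf, kinf, kpart, ← (kinf_summable h0 h1 u).sum_add_tsum_nat_add k, htail]
  ring

lemma kinf_mem_cylIcc (h0 : 0 ≤ α) (h1 : α < 1) (u : ℕ → Bool) (k : ℕ) :
    kinf α u ∈ cylIcc α u k := by
  have := kinf_nonneg h0 h1 (fun i => u (i + k))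
  have := kinf_le_one h0 h1 (fun i => u (i + k))
  have hk : 0 ≤ α ^ k := pow_nonneg h0 k
  rw [cylIcc, kinf_eq_kpart_add h0 h1 u k]
  constructor <;> nlinarith

end Kappa

section Conjugacy

variable {α : ℝ}

lemma abs_kinf_sub_le_of_eqOn (h0 : 0 ≤ α) (h1 : α < 1) {u v : ℕ → Bool} {k : ℕ}
    (h : ∀ i < k, u i = v i) : |kinf α u - kinf α v| ≤ α ^ k :=
  abs_sub_le_of_mem_cylIcc (kinf_mem_cylIcc h0 h1 u k) (cylIcc_congr h ▸ kinf_mem_cylIcc h0 h1 v k)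

lemma eqOn_of_abs_kinf_sub_lt (h0 : 0 < α) (h1 : α < 1 / 2) {u v : ℕ → Bool} {k : ℕ}
    (h : |kinf α u - kinf α v| < (1 - 2 * α) * α ^ k) : ∀ i < k, u i = v i := by
  by_contra! ⟨i, hik, hi⟩
  obtain ⟨m, hmi, hagree, hne⟩ := exists_first_ne hi
  have hsep := pow_mul_le_abs_sub_of_mem_cylIcc h0.le (by linarith) (Nat.lt_succ_self m) hagree
    hne (kinf_mem_cylIcc h0.le (by linarith) u _) (kinf_mem_cylIcc h0.le (by linarith) v _)
  have hpow : α ^ k ≤ α ^ m := pow_le_pow_of_le_one h0.le (by linarith) (by omega)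
  nlinarith

lemma kinf_injective (h0 : 0 < α) (h1 : α < 1 / 2) : Function.Injective (kinf α) := by
  intro u v h
  funext i
  refine eqOn_of_abs_kinf_sub_lt h0 h1 (k := i + 1) ?_ i (Nat.lt_succ_self i)
  rw [h, sub_self, abs_zero]
  exact mul_pos (by linarith) (pow_pos h0 _)

lemma range_kinf (h0 : 0 < α) (h1 : α < 1 / 2) : Set.range (kinf α) = Xinf α := by
  have h1' : α < 1 := by linarith
  ext x
  refine ⟨?_, fun hx => ?_⟩
  · rintro ⟨u, rfl⟩
    exact mem_Xinf_iff.2 fun k _ => ⟨u, kinf_mem_cylIcc h0.le h1' u k⟩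
  have hcyl : ∀ k, ∃ u, x ∈ cylIcc α u k := fun k =>
    let ⟨u, hu⟩ := mem_Xinf_iff.1 hx (k + 1) (by omega)
    ⟨u, cylIcc_succ_subset h0.le h1'.le u k hu⟩
  choose w hw using hcyl
  have hagree : ∀ k, ∀ i < k, w k i = w (i + 1) i := fun k i hi =>
    eqOn_of_mem_cylIcc h0 h1 (cylIcc_antitone h0.le h1'.le (w k) hi (hw k)) (hw (i + 1)) i
      (Nat.lt_succ_self i)
  refine ⟨fun i => w (i + 1) i, eq_of_forall_dist_le fun ε hε => ?_⟩
  obtain ⟨k, hk⟩ := exists_pow_lt_of_lt_one hε h1'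
  rw [Real.dist_eq]
  refine (abs_sub_le_of_mem_cylIcc (kinf_mem_cylIcc h0.le h1' _ k) ?_).trans hk.le
  rw [← cylIcc_congr (hagree k)]
  exact hw k

end Conjugacy

section Odometer

variable {u : ℕ → Bool} {i j : ℕ}

lemma odo_of_forall_true (h : ∀ i, u i = true) : odo u = fun _ => false := by
  funext n
  simp [odo, h]

lemma odo_apply_of_lt (hlt : ∀ i < j, u i = true) (hij : i < j) : odo u i = false := by
  rw [odo, if_pos fun k hk => hlt k (hk.trans hij), hlt i hij, Bool.not_true]

lemma odo_apply_self (hlt : ∀ i < j, u i = true) (hj : u j = false) : odo u j = true := by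
  rw [odo, if_pos hlt, hj, Bool.not_false]

lemma odo_apply_of_gt (hj : u j = false) (hij : j < i) : odo u i = u i := by
  rw [odo, if_neg fun h => by simp [h j hij] at hj]

end Odometer

section Dynamics

variable {α : ℝ} {u : ℕ → Bool} {j : ℕ}

lemma kinf_of_first_false (h0 : 0 ≤ α) (h1 : α < 1) (hlt : ∀ i < j, u i = true)
    (hj : u j = false) :
    kinf α u = 1 - α ^ j + α ^ (j + 1) * kinf α (fun i => u (i + (j + 1))) := by
  rw [kinf_eq_kpart_add h0 h1 u (j + 1), kpart_succ, kpart_of_forall_true hlt, hj]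
  simp

lemma kinf_odo_of_first_false (h0 : 0 ≤ α) (h1 : α < 1) (hlt : ∀ i < j, u i = true)
    (hj : u j = false) :
    kinf α (odo u) = (1 - α) * α ^ j + α ^ (j + 1) * kinf α (fun i => u (i + (j + 1))) := by
  rw [kinf_eq_kpart_add h0 h1 (odo u) (j + 1), kpart_succ,
    kpart_of_forall_false fun i hi => odo_apply_of_lt hlt hi, odo_apply_self hlt hj]
  simp only [if_true, zero_add]
  congr 3
  funext i
  exact odo_apply_of_gt hj (by omega)

lemma fDel_one_sub_pow_add (h0 : 0 < α) (h1 : α < 1 / 2) {s : ℝ} (hs0 : 0 ≤ s)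
    (hs : s ≤ α ^ (j + 1)) : fDel α (1 - α ^ j + s) = s + (1 - α) * α ^ j := by
  have hgap : α ^ (j + 1) < α ^ j - α ^ (j + 1) := by
    rw [pow_succ]
    nlinarith [pow_pos h0 j]
  have hmem : 1 - α ^ j + s < 1 - α ^ (j + 1) := by linarith
  have hJ : sInf {n : ℕ | 1 - α ^ j + s < 1 - α ^ n} = j + 1 := by
    refine le_antisymm (Nat.sInf_le hmem) (le_csInf ⟨_, hmem⟩ fun n hn => ?_)
    by_contra! hnj
    have : α ^ j ≤ α ^ n := pow_le_pow_of_le_one h0.le (by linarith) (by omega)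
    have hn' : 1 - α ^ j + s < 1 - α ^ n := hn
    linarith
  rw [fDel, if_neg (by linarith), hJ]
  simp only [Nat.add_sub_cancel]
  rw [if_pos (by linarith)]
  ring

lemma fDel_kinf (h0 : 0 < α) (h1 : α < 1 / 2) (u : ℕ → Bool) :
    fDel α (kinf α u) = kinf α (odo u) := by
  have h1' : α < 1 := by linarith
  by_cases hall : ∀ i, u i = true
  · rw [kinf_of_forall_true h0.le h1' hall, odo_of_forall_true hall, kinf_const_false, fDel,
      if_pos rfl]
  obtain ⟨i, hi⟩ := not_forall.1 hall
  obtain ⟨j, -, hlt, hj⟩ := exists_first_ne (v := fun _ => true) hi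
  simp only [Bool.not_eq_true] at hj
  have ht0 := kinf_nonneg h0.le h1' (fun i => u (i + (j + 1)))
  have ht1 := kinf_le_one h0.le h1' (fun i => u (i + (j + 1)))
  rw [kinf_of_first_false h0.le h1' hlt hj, kinf_odo_of_first_false h0.le h1' hlt hj,
    fDel_one_sub_pow_add h0 h1 (by positivity) (mul_le_of_le_one_right (by positivity) ht1)]
  ring

end Dynamics

section Cantor

variable {u v : ℕ → Bool}

lemma dCantor_bddAbove (u v : ℕ → Bool) :
    BddAbove (insert 0 {r : ℝ | ∃ i : ℕ, u i ≠ v i ∧ r = (1 / 2) ^ (i + 1)}) := by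
  refine ⟨1, ?_⟩
  rintro r (rfl | ⟨i, -, rfl⟩)
  · norm_num
  · exact pow_le_one₀ (by norm_num) (by norm_num)

lemma eqOn_of_dCantor_lt {k : ℕ} (h : dCantor u v < (1 / 2) ^ k) : ∀ i < k, u i = v i := by
  by_contra! ⟨i, hik, hi⟩
  have hle : (1 / 2 : ℝ) ^ (i + 1) ≤ dCantor u v :=
    le_csSup (dCantor_bddAbove u v) (Set.mem_insert_of_mem _ ⟨i, hi, rfl⟩)
  have : (1 / 2 : ℝ) ^ k ≤ (1 / 2) ^ (i + 1) := pow_le_pow_of_le_one (by norm_num) (by norm_num) hik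
  linarith

lemma dCantor_le_of_eqOn {k : ℕ} (h : ∀ i < k, u i = v i) : dCantor u v ≤ (1 / 2) ^ k := by
  refine csSup_le ⟨0, Set.mem_insert _ _⟩ ?_
  rintro r (rfl | ⟨i, hi, rfl⟩)
  · positivity
  · have hki : k ≤ i := by
      by_contra! hik
      exact hi (h i hik)
    exact pow_le_pow_of_le_one (by norm_num) (by norm_num) (by omega)

end Cantor

/-- `f_α` restricted to `X` is topologically conjugate to the adding machine `(Σ^∞, ⊕1)`
via `κ`: `κ` is a bijection of `Σ^∞` onto `X`, intertwines the dynamics, and both `κ`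
and its inverse are continuous (for the metric `dCantor` on `Σ^∞`). -/
theorem stmt6 (α : ℝ) (hα1 : 0 < α) (hα2 : α < 1 / 2) :
    Set.range (kinf α) = Xinf α ∧
    Function.Injective (kinf α) ∧
    (∀ u : ℕ → Bool, fDel α (kinf α u) = kinf α (odo u)) ∧
    (∀ u : ℕ → Bool, ∀ ε > (0 : ℝ), ∃ δ > (0 : ℝ),
      ∀ v : ℕ → Bool, dCantor u v < δ → |kinf α u - kinf α v| < ε) ∧
    (∀ u : ℕ → Bool, ∀ ε > (0 : ℝ), ∃ δ > (0 : ℝ),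
      ∀ v : ℕ → Bool, |kinf α u - kinf α v| < δ → dCantor u v < ε) := by
  have hα1' : α < 1 := by linarith
  refine ⟨range_kinf hα1 hα2, kinf_injective hα1 hα2, fDel_kinf hα1 hα2, ?_, ?_⟩
  · intro u ε hε
    obtain ⟨k, hk⟩ := exists_pow_lt_of_lt_one hε hα1'
    exact ⟨(1 / 2) ^ k, by positivity, fun v hv =>
      (abs_kinf_sub_le_of_eqOn hα1.le hα1' (eqOn_of_dCantor_lt hv)).trans_lt hk⟩
  · intro u ε hε
    obtain ⟨k, hk⟩ := exists_pow_lt_of_lt_one hε (by norm_num : (1 / 2 : ℝ) < 1)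
    refine ⟨(1 - 2 * α) * α ^ k, mul_pos (by linarith) (pow_pos hα1 k), fun v hv => ?_⟩
    exact (dCantor_le_of_eqOn (eqOn_of_abs_kinf_sub_lt hα1 hα2 hv)).trans_lt hk
end

section
/- The map f_α is not chaotic in the sense of Li and Yorke: it has no Li–Yorke scrambled pair, i.e., there is no pair x ≠ y in [0,1] with liminf_n |f_α^n(x) − f_α^n(y)| = 0 and limsup_n |f_α^n(x) − f_α^n(y)| > 0. -/
/-!
Call `x, y` proximal if the distance of their orbits has `liminf` zero. On the central gap
`(α, 1 - α)` the map is affine with slope `< -1` about its fixed point `p`, so only `p` stays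
in the gap forever; every other orbit eventually enters `[0, α] ∪ [1 - α, 1]`, where `f` swaps
the two halves. A proximal pair can therefore be neither `p` and a point leaving the gap nor
eventually in opposite halves (distance `≥ 1 - 2α`), so at some time both points lie in
`[1 - α, 1]`. Since `f (1 - α + α u) = α f(u)` and `f (α u) = 1 - α + α u`, there `f²` is
conjugate to `f` through the contraction `u ↦ 1 - α + α u`: the pair is the image of a
proximal pair in `[0, 1]` and its distances are `α` times theirs. Induction on `k` shows that
the distances of a proximal pair are eventually `≤ α ^ k` for every `k`, so its `limsup` is 0.
-/

open Set Filter Function Topology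

lemma eventually_of_eventually_add {p : ℕ → Prop} (N : ℕ) (h : ∀ᶠ n in atTop, p (n + N)) :
    ∀ᶠ n in atTop, p n := by
  rwa [← map_add_atTop_eq_nat N, eventually_map]

lemma tendsto_succ_div_two_atTop : Tendsto (fun n : ℕ ↦ (n + 1) / 2) atTop atTop :=
  (Nat.tendsto_div_const_atTop two_ne_zero).comp (tendsto_add_atTop_nat 1)

section Proximal

variable {X : Type*} [PseudoMetricSpace X]

def Proximal (f : X → X) (x y : X) : Prop :=
  ∀ ε > 0, ∃ᶠ n in atTop, dist (f^[n] x) (f^[n] y) < ε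

variable {f : X → X} {x y : X}

lemma Proximal.symm (h : Proximal f x y) : Proximal f y x :=
  fun ε hε ↦ (h ε hε).mono fun n hn ↦ by rwa [dist_comm]

lemma Proximal.iterate (h : Proximal f x y) (N : ℕ) : Proximal f (f^[N] x) (f^[N] y) := by
  intro ε hε
  have := h ε hε
  rw [← map_add_atTop_eq_nat N, frequently_map] at this
  simpa only [← iterate_add_apply] using this

lemma not_proximal_of_eventually_le_dist {δ : ℝ} (hδ : 0 < δ)
    (h : ∀ᶠ n in atTop, δ ≤ dist (f^[n] x) (f^[n] y)) : ¬ Proximal f x y :=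
  fun hxy ↦ (hxy δ hδ).and_eventually h |>.exists.elim fun _ hn ↦ hn.1.not_ge hn.2

end Proximal

lemma eq_zero_of_forall_abs_pow_mul_le {s a B : ℝ} (hs : 1 < |s|)
    (h : ∀ n : ℕ, |s ^ n * a| ≤ B) : a = 0 := by
  by_contra ha
  obtain ⟨n, hn⟩ := pow_unbounded_of_one_lt (B / |a|) hs
  rw [div_lt_iff₀ (abs_pos.2 ha)] at hn
  have := h n
  rw [abs_mul, abs_pow] at this
  linarith

namespace Delahaye

/-- The index `j` of the piece `[1 - α ^ (j - 1), 1 - α ^ j)` containing `x` in `fDel`. -/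
noncomputable def level (α x : ℝ) : ℕ := sInf {n : ℕ | x < 1 - α ^ n}

noncomputable def gapSlope (α : ℝ) : ℝ := (1 - α + α ^ 2) / (2 * α - 1)

noncomputable def fixedPt (α : ℝ) : ℝ := (1 - α ^ 2) / (2 - α)

def scaleRight (α u : ℝ) : ℝ := 1 - α + α * u

variable {α x : ℝ}

lemma fDel_of_ne_one (hx : x ≠ 1) :
    fDel α x = if x ≤ 1 - α ^ (level α x - 1) + α ^ level α x then
        x - 1 + 2 * α ^ (level α x - 1) - α ^ level α x
      else (1 - α + α ^ 2) / (2 * α - 1) * (x - 1) +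
        α ^ (level α x + 1) * (2 - α) / (2 * α - 1) := by
  rw [fDel, if_neg hx]
  rfl

lemma level_eq_succ_iff (h0 : 0 ≤ α) (h1 : α ≤ 1) (k : ℕ) :
    level α x = k + 1 ↔ x < 1 - α ^ (k + 1) ∧ 1 - α ^ k ≤ x := by
  refine (Nat.sInf_upward_closed_eq_succ_iff (s := {n : ℕ | x < 1 - α ^ n})
    (fun m n hmn (hm : x < 1 - α ^ m) ↦ ?_) k).trans (Iff.rfl.and (not_lt (α := ℝ)))
  show x < 1 - α ^ n
  linarith [pow_le_pow_of_le_one h0 h1 hmn]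

lemma exists_level_eq_succ (h1 : α < 1) (hx0 : 0 ≤ x) (hx1 : x < 1) :
    ∃ k, level α x = k + 1 := by
  have hne : {n : ℕ | x < 1 - α ^ n}.Nonempty := by
    obtain ⟨n, hn⟩ := exists_pow_lt_of_lt_one (sub_pos.2 hx1) h1
    exact ⟨n, show x < 1 - α ^ n by linarith⟩
  have hmem : x < 1 - α ^ level α x := Nat.sInf_mem hne
  refine Nat.exists_eq_add_one.2 (Nat.pos_of_ne_zero fun h ↦ ?_)
  rw [h, pow_zero] at hmem
  linarith

lemma level_scaleRight (h0 : 0 < α) (h1 : α < 1) (hx0 : 0 ≤ x) (hx1 : x < 1) :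
    level α (scaleRight α x) = level α x + 1 := by
  obtain ⟨k, hk⟩ := exists_level_eq_succ h1 hx0 hx1
  rw [hk, level_eq_succ_iff h0.le h1.le]
  rw [level_eq_succ_iff h0.le h1.le] at hk
  have hlt := mul_lt_mul_of_pos_left hk.1 h0
  have hge := mul_le_mul_of_nonneg_left hk.2 h0.le
  rw [scaleRight]
  constructor
  · linear_combination hlt
  · linear_combination hge

lemma scaleRight_one : scaleRight α 1 = 1 := by
  rw [scaleRight]; ring

lemma dist_scaleRight (h0 : 0 ≤ α) (u v : ℝ) :
    dist (scaleRight α u) (scaleRight α v) = α * dist u v := by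
  rw [Real.dist_eq, Real.dist_eq, scaleRight, scaleRight,
    show 1 - α + α * u - (1 - α + α * v) = α * (u - v) by ring, abs_mul, abs_of_nonneg h0]

lemma exists_scaleRight_eq (h0 : 0 < α) {z : ℝ} (hz : z ∈ Icc (1 - α) 1) :
    ∃ u ∈ Icc 0 1, scaleRight α u = z := by
  refine ⟨(z - (1 - α)) / α, ⟨div_nonneg (by linarith [hz.1]) h0.le, ?_⟩, ?_⟩
  · rw [div_le_one h0]; linarith [hz.2]
  · rw [scaleRight]; field_simp; ring

lemma fDel_of_le (h0 : 0 < α) (h1 : α < 1 / 2) (hx0 : 0 ≤ x) (hx : x ≤ α) :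
    fDel α x = x + 1 - α := by
  have hlev : level α x = 1 :=
    (level_eq_succ_iff h0.le (by linarith) 0).2 ⟨by norm_num; linarith, by simpa using hx0⟩
  rw [fDel_of_ne_one (by linarith : x < 1).ne, hlev, if_pos (by norm_num; linarith)]
  ring

lemma fDel_of_mem_Ioo (h0 : 0 < α) (h1 : α < 1 / 2) (hx : x ∈ Ioo α (1 - α)) :
    fDel α x = fixedPt α + gapSlope α * (x - fixedPt α) := by
  have hlev : level α x = 1 :=
    (level_eq_succ_iff h0.le (by linarith) 0).2
      ⟨by norm_num; linarith [hx.2], by norm_num; linarith [hx.1]⟩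
  rw [fDel_of_ne_one (by linarith [hx.2] : x < 1).ne, hlev, if_neg (by norm_num; linarith [hx.1]),
    gapSlope, fixedPt]
  -- `field_simp` looks for this side condition in its normal form `α * 2 - 1`.
  have : α * 2 - 1 ≠ 0 := by linarith
  have : 2 - α ≠ 0 := by linarith
  field_simp
  ring

lemma gapSlope_lt_neg_one (h0 : 0 < α) (h1 : α < 1 / 2) : gapSlope α < -1 := by
  rw [gapSlope, div_lt_iff_of_neg (by linarith)]
  nlinarith

lemma fixedPt_mem_Ioo (h1 : α < 1 / 2) : fixedPt α ∈ Ioo α (1 - α) := by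
  rw [fixedPt, mem_Ioo, lt_div_iff₀ (by linarith), div_lt_iff₀ (by linarith)]
  constructor <;> nlinarith

lemma isFixedPt_fixedPt (h0 : 0 < α) (h1 : α < 1 / 2) : IsFixedPt (fDel α) (fixedPt α) := by
  rw [IsFixedPt, fDel_of_mem_Ioo h0 h1 (fixedPt_mem_Ioo h1)]
  ring

lemma fDel_mem_Icc_of_mem_Ioo (h0 : 0 < α) (h1 : α < 1 / 2) (hx : x ∈ Ioo α (1 - α)) :
    fDel α x ∈ Icc 0 1 := by
  have hs := gapSlope_lt_neg_one h0 h1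
  have : α * 2 - 1 ≠ 0 := by linarith
  have : 2 - α ≠ 0 := by linarith
  have hleft : fDel α x = 1 + gapSlope α * (x - α) := by
    rw [fDel_of_mem_Ioo h0 h1 hx, gapSlope, fixedPt]
    field_simp
    ring
  have hright : fDel α x = α * (1 - α) + gapSlope α * (x - (1 - α)) := by
    rw [fDel_of_mem_Ioo h0 h1 hx, gapSlope, fixedPt]
    field_simp
    ring
  constructor
  · rw [hright]; nlinarith [hx.2]
  · rw [hleft]; nlinarith [hx.1]

lemma fDel_scaleRight (h0 : 0 < α) (h1 : α < 1 / 2) (hx : x ∈ Icc 0 1) :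
    fDel α (scaleRight α x) = α * fDel α x := by
  rcases hx.2.eq_or_lt with rfl | hx1
  · rw [scaleRight_one, fDel, if_pos rfl, mul_zero]
  obtain ⟨k, hk⟩ := exists_level_eq_succ (by linarith : α < 1) hx.1 hx1
  have hsx : scaleRight α x < 1 := by rw [scaleRight]; nlinarith
  rw [fDel_of_ne_one hsx.ne, fDel_of_ne_one hx1.ne,
    level_scaleRight h0 (by linarith) hx.1 hx1, hk]
  simp only [Nat.add_sub_cancel]
  have hcond : scaleRight α x ≤ 1 - α ^ (k + 1) + α ^ (k + 1 + 1) ↔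
      x ≤ 1 - α ^ k + α ^ (k + 1) := by
    have : scaleRight α x - (1 - α ^ (k + 1) + α ^ (k + 1 + 1)) =
        α * (x - (1 - α ^ k + α ^ (k + 1))) := by
      rw [scaleRight]; ring
    constructor <;> intro h <;> nlinarith
  by_cases hc : x ≤ 1 - α ^ k + α ^ (k + 1)
  · rw [if_pos (hcond.2 hc), if_pos hc, scaleRight]
    ring
  · rw [if_neg (hc ∘ hcond.1), if_neg hc, scaleRight]
    ring

lemma mapsTo_fDel (h0 : 0 < α) (h1 : α < 1 / 2) : MapsTo (fDel α) (Icc 0 1) (Icc 0 1) := by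
  -- Induction on `n` with `α ^ n < 1 - x`: a point of `[1 - α, 1)` is `scaleRight α u` with
  -- `1 - u = (1 - x) / α`, so it can be pulled back only finitely often.
  suffices h : ∀ n : ℕ, ∀ x, 0 ≤ x → α ^ n < 1 - x → fDel α x ∈ Icc 0 1 by
    rintro x ⟨hx0, hx1⟩
    rcases hx1.eq_or_lt with rfl | hx1
    · simp [fDel]
    obtain ⟨n, hn⟩ := exists_pow_lt_of_lt_one (sub_pos.2 hx1) (by linarith : α < 1)
    exact h n x hx0 hn
  intro n
  induction n with
  | zero => intro x hx0 hn; linarith [pow_zero α]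
  | succ n ih =>
    intro x hx0 hn
    rcases le_or_gt x α with hxl | hxl
    · rw [fDel_of_le h0 h1 hx0 hxl]
      constructor <;> linarith
    rcases lt_or_ge x (1 - α) with hxm | hxr
    · exact fDel_mem_Icc_of_mem_Ioo h0 h1 ⟨hxl, hxm⟩
    obtain ⟨u, hu, rfl⟩ := exists_scaleRight_eq h0 ⟨hxr, by linarith [pow_pos h0 (n + 1)]⟩
    have hun : α ^ n < 1 - u := by
      rw [scaleRight, pow_succ'] at hn
      nlinarith
    obtain ⟨hfu0, hfu1⟩ := ih u hu.1 hun
    rw [fDel_scaleRight h0 h1 hu]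
    exact ⟨mul_nonneg h0.le hfu0, by nlinarith⟩

lemma fDel_mul (h0 : 0 < α) (h1 : α < 1 / 2) {u : ℝ} (hu : u ∈ Icc 0 1) :
    fDel α (α * u) = scaleRight α u := by
  rw [fDel_of_le h0 h1 (mul_nonneg h0.le hu.1) (mul_le_of_le_one_right h0.le hu.2), scaleRight]
  ring

lemma mapsTo_fDel_left (h0 : 0 < α) (h1 : α < 1 / 2) :
    MapsTo (fDel α) (Icc 0 α) (Icc (1 - α) 1) := by
  rintro x ⟨hx0, hxl⟩
  rw [fDel_of_le h0 h1 hx0 hxl]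
  constructor <;> linarith

lemma mapsTo_fDel_right (h0 : 0 < α) (h1 : α < 1 / 2) :
    MapsTo (fDel α) (Icc (1 - α) 1) (Icc 0 α) := by
  intro x hx
  obtain ⟨u, hu, rfl⟩ := exists_scaleRight_eq h0 hx
  obtain ⟨hfu0, hfu1⟩ := mapsTo_fDel h0 h1 hu
  rw [fDel_scaleRight h0 h1 hu]
  exact ⟨mul_nonneg h0.le hfu0, mul_le_of_le_one_right h0.le hfu1⟩

lemma eq_fixedPt_of_forall_iterate_mem_Ioo (h0 : 0 < α) (h1 : α < 1 / 2)
    (hM : ∀ n, (fDel α)^[n] x ∈ Ioo α (1 - α)) : x = fixedPt α := by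
  have hexp : ∀ n, (fDel α)^[n] x - fixedPt α = gapSlope α ^ n * (x - fixedPt α) := by
    intro n
    induction n with
    | zero => simp
    | succ n ih =>
      rw [iterate_succ_apply', fDel_of_mem_Ioo h0 h1 (hM n), pow_succ', mul_assoc, ← ih]
      ring
  have hp := fixedPt_mem_Ioo h1
  refine sub_eq_zero.1
    (eq_zero_of_forall_abs_pow_mul_le (s := gapSlope α) (B := 1) ?_ fun n ↦ ?_)
  · rw [abs_of_neg] <;> linarith [gapSlope_lt_neg_one h0 h1]
  · rw [← hexp n, abs_le]
    constructor <;> linarith [(hM n).1, (hM n).2, hp.1, hp.2]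

lemma mapsTo_fDel_outer (h0 : 0 < α) (h1 : α < 1 / 2) :
    MapsTo (fDel α) (Icc 0 α ∪ Icc (1 - α) 1) (Icc 0 α ∪ Icc (1 - α) 1) :=
  union_comm (Icc (1 - α) 1) _ ▸ (mapsTo_fDel_left h0 h1).union_union (mapsTo_fDel_right h0 h1)

lemma eq_fixedPt_or_eventually_mem_outer (h0 : 0 < α) (h1 : α < 1 / 2) (hx : x ∈ Icc 0 1) :
    x = fixedPt α ∨ ∀ᶠ n in atTop, (fDel α)^[n] x ∈ Icc 0 α ∪ Icc (1 - α) 1 := by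
  by_cases hM : ∀ n, (fDel α)^[n] x ∈ Ioo α (1 - α)
  · exact Or.inl (eq_fixedPt_of_forall_iterate_mem_Ioo h0 h1 hM)
  obtain ⟨N, hN⟩ := not_forall.1 hM
  have hNK : (fDel α)^[N] x ∈ Icc 0 α ∪ Icc (1 - α) 1 := by
    obtain ⟨hN0, hN1⟩ := (mapsTo_fDel h0 h1).iterate N hx
    rw [mem_Ioo, not_and_or, not_lt, not_lt] at hN
    rcases hN with hN | hN
    · exact Or.inl ⟨hN0, hN⟩
    · exact Or.inr ⟨hN, hN1⟩
  refine Or.inr (eventually_of_eventually_add N (.of_forall fun n ↦ ?_))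
  rw [iterate_add_apply]
  exact (mapsTo_fDel_outer h0 h1).iterate n hNK

lemma not_proximal_fixedPt (h0 : 0 < α) (h1 : α < 1 / 2) {y : ℝ}
    (hy : ∀ᶠ n in atTop, (fDel α)^[n] y ∈ Icc 0 α ∪ Icc (1 - α) 1) :
    ¬ Proximal (fDel α) (fixedPt α) y := by
  have hp := fixedPt_mem_Ioo h1
  refine not_proximal_of_eventually_le_dist (lt_min (sub_pos.2 hp.1) (sub_pos.2 hp.2))
    (hy.mono fun n hn ↦ ?_)
  rw [((isFixedPt_fixedPt h0 h1).iterate n).eq, Real.dist_eq]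
  rcases hn with ⟨-, hn⟩ | ⟨hn, -⟩
  · exact (min_le_left _ _).trans ((by linarith : _ ≤ _).trans (le_abs_self _))
  · exact (min_le_right _ _).trans ((by linarith : _ ≤ _).trans (neg_le_abs _))

lemma mapsTo_prodMap_crossed (h0 : 0 < α) (h1 : α < 1 / 2) :
    MapsTo (Prod.map (fDel α) (fDel α))
      (Icc 0 α ×ˢ Icc (1 - α) 1 ∪ Icc (1 - α) 1 ×ˢ Icc 0 α)
      (Icc 0 α ×ˢ Icc (1 - α) 1 ∪ Icc (1 - α) 1 ×ˢ Icc 0 α) :=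
  union_comm (Icc (1 - α) 1 ×ˢ Icc 0 α) _ ▸
    ((mapsTo_fDel_left h0 h1).prodMap (mapsTo_fDel_right h0 h1)).union_union
      ((mapsTo_fDel_right h0 h1).prodMap (mapsTo_fDel_left h0 h1))

lemma not_proximal_of_mem_left_of_mem_right (h0 : 0 < α) (h1 : α < 1 / 2) {y : ℝ} {N : ℕ}
    (hx : (fDel α)^[N] x ∈ Icc 0 α) (hy : (fDel α)^[N] y ∈ Icc (1 - α) 1) :
    ¬ Proximal (fDel α) x y := by
  refine fun hxy ↦ not_proximal_of_eventually_le_dist (δ := 1 - 2 * α) (by linarith)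
    (.of_forall fun n ↦ ?_) (hxy.iterate N)
  have hn := (mapsTo_prodMap_crossed h0 h1).iterate n (mem_union_left _ (mk_mem_prod hx hy))
  rw [Prod.map_iterate, mem_union, mem_prod, mem_prod, Prod.map_fst, Prod.map_snd] at hn
  rw [Real.dist_eq]
  rcases hn with ⟨⟨-, ha⟩, ⟨hb, -⟩⟩ | ⟨⟨ha, -⟩, ⟨-, hb⟩⟩
  · exact (by linarith : _ ≤ _).trans (neg_le_abs _)
  · exact (by linarith : _ ≤ _).trans (le_abs_self _)

lemma iterate_two_mul_fDel_scaleRight (h0 : 0 < α) (h1 : α < 1 / 2) {u : ℝ} (hu : u ∈ Icc 0 1)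
    (m : ℕ) : (fDel α)^[2 * m] (scaleRight α u) = scaleRight α ((fDel α)^[m] u) := by
  induction m with
  | zero => rfl
  | succ m ih =>
    have hm := (mapsTo_fDel h0 h1).iterate m hu
    rw [Nat.mul_succ, iterate_succ_apply', iterate_succ_apply', ih, fDel_scaleRight h0 h1 hm,
      fDel_mul h0 h1 (mapsTo_fDel h0 h1 hm), iterate_succ_apply']

lemma dist_iterate_fDel_scaleRight (h0 : 0 < α) (h1 : α < 1 / 2) {u v : ℝ} (hu : u ∈ Icc 0 1)
    (hv : v ∈ Icc 0 1) (n : ℕ) :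
    dist ((fDel α)^[n] (scaleRight α u)) ((fDel α)^[n] (scaleRight α v)) =
      α * dist ((fDel α)^[(n + 1) / 2] u) ((fDel α)^[(n + 1) / 2] v) := by
  obtain ⟨m, rfl | rfl⟩ := Nat.even_or_odd' n
  · rw [show (2 * m + 1) / 2 = m by omega, iterate_two_mul_fDel_scaleRight h0 h1 hu,
      iterate_two_mul_fDel_scaleRight h0 h1 hv, dist_scaleRight h0.le]
  · rw [show (2 * m + 1 + 1) / 2 = m + 1 by omega, iterate_succ_apply', iterate_succ_apply',
      iterate_two_mul_fDel_scaleRight h0 h1 hu, iterate_two_mul_fDel_scaleRight h0 h1 hv,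
      fDel_scaleRight h0 h1 ((mapsTo_fDel h0 h1).iterate m hu),
      fDel_scaleRight h0 h1 ((mapsTo_fDel h0 h1).iterate m hv), iterate_succ_apply',
      iterate_succ_apply', Real.dist_eq, Real.dist_eq, ← mul_sub, abs_mul, abs_of_pos h0]

lemma proximal_of_proximal_scaleRight (h0 : 0 < α) (h1 : α < 1 / 2) {u v : ℝ}
    (hu : u ∈ Icc 0 1) (hv : v ∈ Icc 0 1)
    (h : Proximal (fDel α) (scaleRight α u) (scaleRight α v)) : Proximal (fDel α) u v := by
  intro ε hε
  refine tendsto_succ_div_two_atTop.frequently ((h (α * ε) (by positivity)).mono fun n hn ↦ ?_)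
  rw [dist_iterate_fDel_scaleRight h0 h1 hu hv] at hn
  exact lt_of_mul_lt_mul_left hn h0.le

lemma eventually_dist_iterate_fDel_scaleRight_le (h0 : 0 < α) (h1 : α < 1 / 2) {u v c : ℝ}
    (hu : u ∈ Icc 0 1) (hv : v ∈ Icc 0 1)
    (h : ∀ᶠ n in atTop, dist ((fDel α)^[n] u) ((fDel α)^[n] v) ≤ c) :
    ∀ᶠ n in atTop,
      dist ((fDel α)^[n] (scaleRight α u)) ((fDel α)^[n] (scaleRight α v)) ≤ α * c :=
  (tendsto_succ_div_two_atTop.eventually h).mono fun n hn ↦ by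
    rw [dist_iterate_fDel_scaleRight h0 h1 hu hv]
    exact mul_le_mul_of_nonneg_left hn h0.le

lemma eventually_dist_le_mul_of_iterate_mem_right (h0 : 0 < α) (h1 : α < 1 / 2) {y c : ℝ}
    (hc : ∀ u ∈ Icc (0 : ℝ) 1, ∀ v ∈ Icc (0 : ℝ) 1, Proximal (fDel α) u v →
      ∀ᶠ n in atTop, dist ((fDel α)^[n] u) ((fDel α)^[n] v) ≤ c)
    (hxy : Proximal (fDel α) x y) {N : ℕ} (hx : (fDel α)^[N] x ∈ Icc (1 - α) 1)
    (hy : (fDel α)^[N] y ∈ Icc (1 - α) 1) :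
    ∀ᶠ n in atTop, dist ((fDel α)^[n] x) ((fDel α)^[n] y) ≤ α * c := by
  obtain ⟨u, hu, hux⟩ := exists_scaleRight_eq h0 hx
  obtain ⟨v, hv, hvy⟩ := exists_scaleRight_eq h0 hy
  have huv : Proximal (fDel α) u v := by
    refine proximal_of_proximal_scaleRight h0 h1 hu hv ?_
    rw [hux, hvy]
    exact hxy.iterate N
  refine eventually_of_eventually_add N ?_
  simp only [iterate_add_apply, ← hux, ← hvy]
  exact eventually_dist_iterate_fDel_scaleRight_le h0 h1 hu hv (hc u hu v hv huv)

lemma exists_iterate_mem_right (h0 : 0 < α) (h1 : α < 1 / 2) {y : ℝ}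
    (hxy : Proximal (fDel α) x y) {N : ℕ} (hx : (fDel α)^[N] x ∈ Icc 0 α ∪ Icc (1 - α) 1)
    (hy : (fDel α)^[N] y ∈ Icc 0 α ∪ Icc (1 - α) 1) :
    ∃ M, (fDel α)^[M] x ∈ Icc (1 - α) 1 ∧ (fDel α)^[M] y ∈ Icc (1 - α) 1 := by
  rcases hx with hx | hx <;> rcases hy with hy | hy
  · refine ⟨N + 1, ?_, ?_⟩ <;> rw [iterate_succ_apply']
    exacts [mapsTo_fDel_left h0 h1 hx, mapsTo_fDel_left h0 h1 hy]
  · exact (not_proximal_of_mem_left_of_mem_right h0 h1 hx hy hxy).elim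
  · exact (not_proximal_of_mem_left_of_mem_right h0 h1 hy hx hxy.symm).elim
  · exact ⟨N, hx, hy⟩

lemma eventually_dist_iterate_le_pow (h0 : 0 < α) (h1 : α < 1 / 2) (k : ℕ) :
    ∀ x ∈ Icc (0 : ℝ) 1, ∀ y ∈ Icc (0 : ℝ) 1, Proximal (fDel α) x y →
      ∀ᶠ n in atTop, dist ((fDel α)^[n] x) ((fDel α)^[n] y) ≤ α ^ k := by
  induction k with
  | zero =>
    intro x hx y hy _
    refine .of_forall fun n ↦ ?_
    rw [pow_zero]
    exact Real.dist_le_of_mem_Icc_01 ((mapsTo_fDel h0 h1).iterate n hx)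
      ((mapsTo_fDel h0 h1).iterate n hy)
  | succ k ih =>
    intro x hx y hy hxy
    rcases eq_fixedPt_or_eventually_mem_outer h0 h1 hx with rfl | hxK <;>
      rcases eq_fixedPt_or_eventually_mem_outer h0 h1 hy with rfl | hyK
    · exact .of_forall fun n ↦ (dist_self _).trans_le (pow_nonneg h0.le _)
    · exact (not_proximal_fixedPt h0 h1 hyK hxy).elim
    · exact (not_proximal_fixedPt h0 h1 hxK hxy.symm).elim
    · obtain ⟨N, hxN, hyN⟩ := (hxK.and hyK).exists
      obtain ⟨M, hxM, hyM⟩ := exists_iterate_mem_right h0 h1 hxy hxN hyN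
      rw [pow_succ']
      exact eventually_dist_le_mul_of_iterate_mem_right h0 h1 ih hxy hxM hyM

theorem tendsto_dist_iterate_of_proximal (h0 : 0 < α) (h1 : α < 1 / 2) {y : ℝ}
    (hx : x ∈ Icc 0 1) (hy : y ∈ Icc 0 1) (hxy : Proximal (fDel α) x y) :
    Tendsto (fun n ↦ dist ((fDel α)^[n] x) ((fDel α)^[n] y)) atTop (𝓝 0) := by
  refine tendsto_order.2
    ⟨fun a ha ↦ .of_forall fun n ↦ ha.trans_le dist_nonneg, fun ε hε ↦ ?_⟩
  obtain ⟨k, hk⟩ := exists_pow_lt_of_lt_one hε (by linarith : α < 1)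
  exact (eventually_dist_iterate_le_pow h0 h1 k x hx y hy hxy).mono fun n hn ↦ hn.trans_lt hk

end Delahaye

/-- `f_α` is not Li–Yorke chaotic: there is no pair `x ≠ y` in `[0,1]` with
`liminf_n |f^n x - f^n y| = 0` and `limsup_n |f^n x - f^n y| > 0`. -/
theorem stmt8 (α : ℝ) (hα1 : 0 < α) (hα2 : α < 1 / 2) :
    ¬ ∃ x ∈ Set.Icc (0 : ℝ) 1, ∃ y ∈ Set.Icc (0 : ℝ) 1, x ≠ y ∧
      Filter.liminf (fun n : ℕ => |(fDel α)^[n] x - (fDel α)^[n] y|) Filter.atTop = 0 ∧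
      0 < Filter.limsup (fun n : ℕ => |(fDel α)^[n] x - (fDel α)^[n] y|) Filter.atTop := by
  rintro ⟨x, hx, y, hy, -, hinf, hsup⟩
  have hmaps := Delahaye.mapsTo_fDel hα1 hα2
  have hbdd : ∀ n, |(fDel α)^[n] x - (fDel α)^[n] y| ≤ 1 := fun n ↦
    Real.dist_le_of_mem_Icc_01 (hmaps.iterate n hx) (hmaps.iterate n hy)
  have hxy : Proximal (fDel α) x y := fun ε hε ↦
    frequently_lt_of_liminf_lt (isCoboundedUnder_ge_of_le atTop hbdd) (hinf ▸ hε)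
  exact hsup.ne' (Delahaye.tendsto_dist_iterate_of_proximal hα1 hα2 hx hy hxy).limsup_eq
end

section
/- For every k ≥ 0, the set X_k \ X_{k+1} contains exactly one periodic orbit of f_α, and this orbit has period 2^k. Moreover any point x of this orbit satisfies f_α^i(x) = f_{α,k}^i(x) for all i ≥ 0. -/
/-- The `k`-th approximation `f_{α,k}`: equal to `f_α` on `[0, 1-α^{k-1}+α^k]`, equal to
`x - 1 + α^k` on `[1-α^k, 1]`, and linear in between; `f_{α,0} = id`. -/
noncomputable def fDelk (α : ℝ) (k : ℕ) (x : ℝ) : ℝ :=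
  if k = 0 then x
  else if x ≤ 1 - α ^ (k - 1) + α ^ k then fDel α x
  else if 1 - α ^ k ≤ x then x - 1 + α ^ k
  else fDel α (1 - α ^ (k - 1) + α ^ k) +
    (x - (1 - α ^ (k - 1) + α ^ k)) / ((1 - α ^ k) - (1 - α ^ (k - 1) + α ^ k)) *
      (0 - fDel α (1 - α ^ (k - 1) + α ^ k))

/-- `X_k = ∪_{u∈Σ^k} I(u)`. -/
def Xk (α : ℝ) (k : ℕ) : Set ℝ :=
  ⋃ u : Fin k → Bool, Set.Icc (kfin α u) (kfin α u + α ^ k)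

open Function Set

section PeriodicOrbits

variable {X : Type*} {f : X → X} {y : X}

lemma exists_iterate_iterate_eq_of_mem_periodicPts (hy : y ∈ periodicPts f) (n : ℕ) :
    ∃ m, f^[m] (f^[n] y) = y := by
  have hn : n ≤ minimalPeriod f y * n :=
    Nat.le_mul_of_pos_left n (minimalPeriod_pos_of_mem_periodicPts hy)
  refine ⟨minimalPeriod f y * n - n, ?_⟩
  rw [← iterate_add_apply, Nat.sub_add_cancel hn]
  exact ((isPeriodicPt_minimalPeriod f y).mul_const n).eq

lemma iterate_mem_diff_of_mem_periodicPts {A B : Set X} (hA : MapsTo f A A) (hB : MapsTo f B B)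
    (hy : y ∈ periodicPts f) (hyAB : y ∈ A \ B) (n : ℕ) : f^[n] y ∈ A \ B := by
  refine ⟨hA.iterate n hyAB.1, fun hn => hyAB.2 ?_⟩
  obtain ⟨m, hm⟩ := exists_iterate_iterate_eq_of_mem_periodicPts hy n
  exact hm ▸ hB.iterate m hn

end PeriodicOrbits

lemma eq_of_mem_periodicPts_of_sub_eq_mul {f : ℝ → ℝ} {S : Set ℝ} {c C : ℝ} (hC : 1 < |C|)
    (hf : ∀ x ∈ S, f x - c = C * (x - c)) {y : ℝ} (hy : y ∈ periodicPts f)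
    (horbit : ∀ n, f^[n] y ∈ S) : y = c := by
  have hiter : ∀ n, f^[n] y - c = C ^ n * (y - c) := by
    intro n
    induction n with
    | zero => simp
    | succ n ih => rw [iterate_succ_apply', hf _ (horbit n), ih, pow_succ']; ring
  obtain ⟨p, hp, hper⟩ := mem_periodicPts.1 hy
  have hCp : C ^ p - 1 ≠ 0 := by
    refine sub_ne_zero.2 fun h => ?_
    simpa [← abs_pow, h] using one_lt_pow₀ hC hp.ne'
  have hfix : (C ^ p - 1) * (y - c) = 0 := by linear_combination -(hiter p) + hper.eq
  exact sub_eq_zero.1 ((mul_eq_zero.1 hfix).resolve_left hCp)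

/-- `g²` on `c • [0,1]` is then conjugate to `h` by `z ↦ c * z`. -/
def IsRenormalization (c : ℝ) (g h : ℝ → ℝ) : Prop :=
  ∀ z ∈ Icc (0 : ℝ) 1, g (c * z) = 1 - c + c * z ∧ g (1 - c + c * z) = c * h z

namespace IsRenormalization

variable {c z : ℝ} {g h : ℝ → ℝ}

lemma iterate_two_mul (hg : IsRenormalization c g h) (hz : ∀ m, h^[m] z ∈ Icc 0 1) (m : ℕ) :
    g^[2 * m] (c * z) = c * h^[m] z := by
  induction m with
  | zero => simp
  | succ m ih =>
    rw [show 2 * (m + 1) = 2 + 2 * m by ring, iterate_add_apply, ih]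
    change g (g _) = _
    rw [(hg _ (hz m)).1, (hg _ (hz m)).2, iterate_succ_apply']

lemma iterate_two_mul_add_one (hg : IsRenormalization c g h) (hz : ∀ m, h^[m] z ∈ Icc 0 1)
    (m : ℕ) : g^[2 * m + 1] (c * z) = 1 - c + c * h^[m] z := by
  rw [iterate_succ_apply', hg.iterate_two_mul hz, (hg _ (hz m)).1]

lemma iterate_mul_eq {g' h' : ℝ → ℝ} (hg : IsRenormalization c g h)
    (hg' : IsRenormalization c g' h') (hz : ∀ m, h^[m] z ∈ Icc 0 1)
    (hh : ∀ m, h^[m] z = h'^[m] z) (i : ℕ) : g^[i] (c * z) = g'^[i] (c * z) := by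
  have hz' : ∀ m, h'^[m] z ∈ Icc 0 1 := fun m => hh m ▸ hz m
  obtain ⟨m, rfl | rfl⟩ := Nat.even_or_odd' i
  · rw [hg.iterate_two_mul hz, hg'.iterate_two_mul hz', hh]
  · rw [hg.iterate_two_mul_add_one hz, hg'.iterate_two_mul_add_one hz', hh]

lemma minimalPeriod_mul (hg : IsRenormalization c g h) (hc0 : 0 < c) (hc : c < 1 / 2)
    (hz : ∀ m, h^[m] z ∈ Icc 0 1) : minimalPeriod g (c * z) = 2 * minimalPeriod h z := by
  have hper : ∀ m, IsPeriodicPt g (2 * m) (c * z) ↔ IsPeriodicPt h m z := fun m => by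
    rw [IsPeriodicPt, IsFixedPt, hg.iterate_two_mul hz, mul_right_inj' hc0.ne']
    rfl
  -- odd iterates land in `[1 - c, 1]`, which is disjoint from `c • [0,1]`
  have hodd : ∀ m, ¬ IsPeriodicPt g (2 * m + 1) (c * z) := fun m hm => by
    have heq := hm.eq
    rw [hg.iterate_two_mul_add_one hz] at heq
    have hz0 : 0 ≤ h^[m] z := (hz m).1
    have hz1 : z ≤ 1 := (hz 0).2
    nlinarith
  apply Nat.dvd_antisymm
  · exact ((hper _).2 (isPeriodicPt_minimalPeriod h z)).minimalPeriod_dvd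
  · obtain ⟨m, hm | hm⟩ := Nat.even_or_odd' (minimalPeriod g (c * z))
    · have := isPeriodicPt_minimalPeriod g (c * z)
      rw [hm] at this ⊢
      exact Nat.mul_dvd_mul_left 2 ((hper m).1 this).minimalPeriod_dvd
    · exact absurd (hm ▸ isPeriodicPt_minimalPeriod g (c * z)) (hodd m)

end IsRenormalization

section Delahaye

variable {α : ℝ}

lemma sInf_setOf_lt_one_sub_pow (hα0 : 0 < α) (hα1 : α < 1) {x : ℝ} {n : ℕ}
    (hx : x ∈ Ico (1 - α ^ n) (1 - α ^ (n + 1))) : sInf {m : ℕ | x < 1 - α ^ m} = n + 1 := by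
  refine (Nat.sInf_upward_closed_eq_succ_iff (fun m₁ m₂ hm hm₁ => ?_) n).2
    ⟨hx.2, fun hn => (not_lt.2 hx.1) hn⟩
  exact hm₁.trans_le (sub_le_sub_left (pow_le_pow_of_le_one hα0.le hα1.le hm) 1)

lemma fDel_eq_of_mem_Ico (hα0 : 0 < α) (hα1 : α < 1) {x : ℝ} (n : ℕ)
    (hx : x ∈ Ico (1 - α ^ n) (1 - α ^ (n + 1))) :
    fDel α x = if x ≤ 1 - α ^ n + α ^ (n + 1) then x - 1 + 2 * α ^ n - α ^ (n + 1)
      else (1 - α + α ^ 2) / (2 * α - 1) * (x - 1) + α ^ (n + 2) * (2 - α) / (2 * α - 1) := by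
  have hx1 : x ≠ 1 := (hx.2.trans_le (by simp [pow_nonneg hα0.le])).ne
  simp only [fDel, if_neg hx1, sInf_setOf_lt_one_sub_pow hα0 hα1 hx, Nat.add_sub_cancel]

lemma exists_mem_Ico_one_sub_pow (hα1 : α < 1) {x : ℝ} (hx : x ∈ Ico 0 1) :
    ∃ n : ℕ, x ∈ Ico (1 - α ^ n) (1 - α ^ (n + 1)) := by
  have hex : ∃ n : ℕ, x < 1 - α ^ n := by
    obtain ⟨n, hn⟩ := exists_pow_lt_of_lt_one (sub_pos.2 hx.2) hα1
    exact ⟨n, by linarith⟩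
  classical
  have hpos : Nat.find hex ≠ 0 := fun h => by simpa [h] using hx.1.trans_lt (Nat.find_spec hex)
  obtain ⟨n, hn⟩ := Nat.exists_eq_succ_of_ne_zero hpos
  have hspec := Nat.find_spec hex
  rw [hn] at hspec
  exact ⟨n, not_lt.1 (Nat.find_min hex (by omega)), hspec⟩

lemma fDel_one : fDel α 1 = 0 := by simp [fDel]

lemma fDel_of_le (hα0 : 0 < α) (hα : α < 1 / 2) {x : ℝ} (hx : x ∈ Icc 0 α) :
    fDel α x = x + 1 - α := by
  rw [fDel_eq_of_mem_Ico hα0 (by linarith) 0 ⟨by simpa using hx.1, by norm_num; linarith [hx.2]⟩,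
    if_pos (by simpa using hx.2)]
  ring

lemma fDel_of_mem_Ioo (hα0 : 0 < α) (hα1 : α < 1) {x : ℝ} (hx : x ∈ Ioo α (1 - α)) :
    fDel α x = (1 - α + α ^ 2) / (2 * α - 1) * (x - 1) + α ^ 2 * (2 - α) / (2 * α - 1) := by
  rw [fDel_eq_of_mem_Ico hα0 hα1 0 ⟨by linarith [hx.1], by simpa using hx.2⟩,
    if_neg (by simpa using hx.1)]

lemma fDel_one_sub_add_mul (hα0 : 0 < α) (hα1 : α < 1) {x : ℝ} (hx : x ∈ Icc 0 1) :
    fDel α (1 - α + α * x) = α * fDel α x := by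
  rcases hx.2.eq_or_lt with rfl | hx1
  · simp [fDel_one]
  obtain ⟨n, hn⟩ := exists_mem_Ico_one_sub_pow hα1 ⟨hx.1, hx1⟩
  have hn' : 1 - α + α * x ∈ Ico (1 - α ^ (n + 1)) (1 - α ^ (n + 1 + 1)) := by
    constructor <;> nlinarith [hn.1, hn.2, pow_succ' α n, pow_succ' α (n + 1)]
  have hcond : 1 - α + α * x ≤ 1 - α ^ (n + 1) + α ^ (n + 1 + 1) ↔
      x ≤ 1 - α ^ n + α ^ (n + 1) := by
    rw [show 1 - α ^ (n + 1) + α ^ (n + 1 + 1) = 1 - α + α * (1 - α ^ n + α ^ (n + 1)) by ring]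
    constructor <;> intro h <;> nlinarith
  rw [fDel_eq_of_mem_Ico hα0 hα1 (n + 1) hn', fDel_eq_of_mem_Ico hα0 hα1 n hn]
  simp only [hcond]
  split_ifs <;> ring

lemma fDel_mem_Icc_of_mem_Ico (hα0 : 0 < α) (hα : α < 1 / 2) {x : ℝ} (hx : x ∈ Ico 0 (1 - α)) :
    fDel α x ∈ Icc 0 1 := by
  rcases le_or_gt x α with hxα | hxα
  · rw [fDel_of_le hα0 hα ⟨hx.1, hxα⟩]
    constructor <;> linarith [hx.1]
  rw [fDel_of_mem_Ioo hα0 (by linarith) ⟨hxα, hx.2⟩, div_mul_eq_mul_div, ← add_div]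
  have hneg : 2 * α - 1 < 0 := by linarith
  constructor
  · refine div_nonneg_of_nonpos ?_ hneg.le
    nlinarith [mul_nonneg (by nlinarith : (0 : ℝ) ≤ 1 - α + α ^ 2)
        (by linarith [hx.2] : (0 : ℝ) ≤ 1 - α - x), mul_pos (mul_pos hα0 (by linarith : (0 : ℝ) < 1 - α)) (by linarith : (0 : ℝ) < 1 - 2 * α)]
  · rw [div_le_one_of_neg hneg]
    nlinarith

lemma mapsTo_fDel_Icc (hα0 : 0 < α) (hα : α < 1 / 2) : MapsTo (fDel α) (Icc 0 1) (Icc 0 1) := by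
  -- induction over the blocks `[0, 1 - α ^ n]`, which exhaust `[0, 1)`
  have hblock : ∀ n : ℕ, MapsTo (fDel α) (Icc 0 (1 - α ^ n)) (Icc 0 1) := by
    intro n
    induction n with
    | zero => exact fun x hx => fDel_mem_Icc_of_mem_Ico hα0 hα ⟨hx.1, by simp at hx; linarith⟩
    | succ n ih =>
      intro x hx
      rcases lt_or_ge x (1 - α) with hx1 | hx1
      · exact fDel_mem_Icc_of_mem_Ico hα0 hα ⟨hx.1, hx1⟩
      set t := (x - (1 - α)) / α
      have hxt : x = 1 - α + α * t := by simp only [t]; field_simp; ring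
      have ht : t ∈ Icc 0 (1 - α ^ n) := by
        rw [hxt, pow_succ'] at hx
        constructor <;> nlinarith [hx.2]
      have hft := ih ht
      rw [hxt, fDel_one_sub_add_mul hα0 (by linarith) ⟨ht.1, by linarith [ht.2, pow_pos hα0 n]⟩]
      constructor <;> nlinarith [hft.1, hft.2]
  intro x hx
  rcases hx.2.eq_or_lt with rfl | hx1
  · simp [fDel_one]
  obtain ⟨n, hn⟩ := exists_pow_lt_of_lt_one (sub_pos.2 hx1) (by linarith : α < 1)
  exact hblock n ⟨hx.1, by linarith⟩

lemma isRenormalization_fDel (hα0 : 0 < α) (hα : α < 1 / 2) :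
    IsRenormalization α (fDel α) (fDel α) := fun z hz =>
  ⟨by rw [fDel_of_le hα0 hα ⟨by nlinarith [hz.1], by nlinarith [hz.2]⟩]; ring,
    fDel_one_sub_add_mul hα0 (by linarith) hz⟩

lemma isRenormalization_fDelk (hα0 : 0 < α) (hα : α < 1 / 2) (k : ℕ) :
    IsRenormalization α (fDelk α (k + 1)) (fDelk α k) := by
  intro z hz
  have hpow : ∀ n : ℕ, 0 < α ^ n ∧ α ^ n ≤ 1 := fun n =>
    ⟨pow_pos hα0 n, pow_le_one₀ hα0.le (by linarith)⟩
  constructor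
  · have hle : α * z ≤ 1 - α ^ k + α ^ (k + 1) := by
      nlinarith [hz.2, hpow k, pow_succ α k]
    rw [fDelk, if_neg k.succ_ne_zero, Nat.add_sub_cancel, if_pos hle,
      fDel_of_le hα0 hα ⟨by nlinarith [hz.1], by nlinarith [hz.2]⟩]
    ring
  cases k with
  | zero =>
    rw [fDelk, if_neg (Nat.succ_ne_zero 0), if_neg (by norm_num; nlinarith [hz.1]),
      if_pos (by norm_num; nlinarith [hz.1]), fDelk, if_pos rfl]
    ring
  | succ n =>
    set a := 1 - α ^ n + α ^ (n + 1)
    set b := 1 - α ^ (n + 1)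
    have ha : a ∈ Icc 0 1 := by
      simp only [a]
      constructor <;> nlinarith [hpow n, pow_succ α n]
    simp only [fDelk, Nat.add_one_ne_zero, if_false, Nat.add_sub_cancel]
    rw [show 1 - α ^ (n + 1) + α ^ (n + 1 + 1) = 1 - α + α * a by simp only [a]; ring,
      show 1 - α ^ (n + 1 + 1) = 1 - α + α * b by simp only [b]; ring]
    have hca : 1 - α + α * z ≤ 1 - α + α * a ↔ z ≤ a := by
      constructor <;> intro h <;> nlinarith
    have hcb : 1 - α + α * b ≤ 1 - α + α * z ↔ b ≤ z := by
      constructor <;> intro h <;> nlinarith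
    have hslope : (1 - α + α * z - (1 - α + α * a)) / (1 - α + α * b - (1 - α + α * a)) =
        (z - a) / (b - a) := by
      rw [show 1 - α + α * z - (1 - α + α * a) = α * (z - a) by ring,
        show 1 - α + α * b - (1 - α + α * a) = α * (b - a) by ring,
        mul_div_mul_left _ _ hα0.ne']
    simp only [hca, hcb, hslope, fDel_one_sub_add_mul hα0 (by linarith) ha]
    split_ifs
    · exact fDel_one_sub_add_mul hα0 (by linarith) hz
    · ring
    · ring

lemma kfin_cons {k : ℕ} (b : Bool) (u : Fin k → Bool) :
    kfin α (Fin.cons b u) = (if b then 1 - α else 0) + α * kfin α u := by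
  have hsum : ∑ i : Fin k, (if u i then α ^ ((i : ℕ) + 1) else 0) =
      α * ∑ i : Fin k, (if u i then α ^ (i : ℕ) else 0) := by
    rw [Finset.mul_sum]
    exact Finset.sum_congr rfl fun i _ => by split_ifs <;> ring
  cases b <;> simp [kfin, Fin.sum_univ_succ, hsum] <;> ring

lemma Xk_zero : Xk α 0 = Icc 0 1 := by
  simp only [Xk, kfin, Finset.univ_eq_empty, Finset.sum_empty, mul_zero, pow_zero, zero_add]
  exact iUnion_const _

lemma Xk_succ (hα0 : 0 < α) (k : ℕ) :
    Xk α (k + 1) = (α * ·) '' Xk α k ∪ (1 - α + α * ·) '' Xk α k := by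
  have himage : ∀ (c : ℝ) (u : Fin k → Bool),
      (c + α * ·) '' Icc (kfin α u) (kfin α u + α ^ k) =
        Icc (c + α * kfin α u) (c + α * kfin α u + α ^ (k + 1)) := by
    intro c u
    rw [← image_image (c + ·) (α * ·), image_mul_left_Icc hα0.le (by simp [pow_nonneg hα0.le]),
      image_const_add_Icc, pow_succ']
    ring_nf
  have hmul : ∀ u : Fin k → Bool, (α * ·) '' Icc (kfin α u) (kfin α u + α ^ k) =
      Icc (α * kfin α u) (α * kfin α u + α ^ (k + 1)) := fun u => by simpa using himage 0 u
  ext x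
  simp only [Xk, image_iUnion, mem_union, mem_iUnion, Fin.exists_fin_succ_pi, Bool.exists_bool,
    kfin_cons, Bool.false_eq_true, if_false, if_true, zero_add, himage, hmul]

lemma Xk_subset_Icc (hα0 : 0 < α) (hα1 : α < 1) (k : ℕ) : Xk α k ⊆ Icc 0 1 := by
  induction k with
  | zero => exact Xk_zero.subset
  | succ k ih =>
    rw [Xk_succ hα0]
    rintro _ (⟨t, ht, rfl⟩ | ⟨t, ht, rfl⟩) <;> obtain ⟨ht0, ht1⟩ := ih ht <;>
      constructor <;> nlinarith

lemma Xk_one (hα0 : 0 < α) : Xk α 1 = Icc 0 α ∪ Icc (1 - α) 1 := by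
  rw [Xk_succ hα0, Xk_zero, image_mul_left_Icc hα0.le zero_le_one,
    ← image_image (1 - α + ·) (α * ·), image_mul_left_Icc hα0.le zero_le_one,
    image_const_add_Icc]
  norm_num

lemma mul_mem_Xk_succ_iff (hα0 : 0 < α) (hα : α < 1 / 2) {k : ℕ} {t : ℝ} (ht : t ∈ Icc 0 1) :
    α * t ∈ Xk α (k + 1) ↔ t ∈ Xk α k := by
  rw [Xk_succ hα0]
  refine ⟨?_, fun h => Or.inl ⟨t, h, rfl⟩⟩
  rintro (⟨s, hs, hst⟩ | ⟨s, hs, hst⟩)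
  · rwa [← mul_left_cancel₀ hα0.ne' hst]
  · have := (Xk_subset_Icc hα0 (by linarith) k hs).1
    nlinarith [ht.2]

lemma mapsTo_fDel_Xk (hα0 : 0 < α) (hα : α < 1 / 2) (k : ℕ) :
    MapsTo (fDel α) (Xk α k) (Xk α k) := by
  induction k with
  | zero => exact Xk_zero ▸ mapsTo_fDel_Icc hα0 hα
  | succ k ih =>
    have hren := isRenormalization_fDel hα0 hα
    rw [Xk_succ hα0]
    rintro _ (⟨t, ht, rfl⟩ | ⟨t, ht, rfl⟩) <;>
      have ht01 := Xk_subset_Icc hα0 (by linarith) k ht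
    · exact Or.inr ⟨t, ht, ((hren t ht01).1).symm⟩
    · exact Or.inl ⟨fDel α t, ih ht, ((hren t ht01).2).symm⟩

/-- The fixed point of the middle branch of `fDel α`, which is affine on `(α, 1 - α)`. -/
noncomputable def fDelFixedPt (α : ℝ) : ℝ := (1 - α ^ 2) / (2 - α)

lemma fDelFixedPt_mem_Ioo (hα0 : 0 < α) (hα : α < 1 / 2) : fDelFixedPt α ∈ Ioo α (1 - α) := by
  rw [fDelFixedPt, mem_Ioo, lt_div_iff₀ (by linarith), div_lt_iff₀ (by linarith)]
  constructor <;> nlinarith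

lemma fDel_sub_fDelFixedPt (hα0 : 0 < α) (hα : α < 1 / 2) {x : ℝ} (hx : x ∈ Ioo α (1 - α)) :
    fDel α x - fDelFixedPt α = (1 - α + α ^ 2) / (2 * α - 1) * (x - fDelFixedPt α) := by
  have h1 : 2 * α - 1 ≠ 0 := by linarith
  have h2 : 2 - α ≠ 0 := by linarith
  have hfix : (1 - α + α ^ 2) / (2 * α - 1) * (fDelFixedPt α - 1) +
      α ^ 2 * (2 - α) / (2 * α - 1) = fDelFixedPt α := by
    rw [div_mul_eq_mul_div, ← add_div, div_eq_iff h1, fDelFixedPt]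
    field_simp
    ring
  rw [fDel_of_mem_Ioo hα0 (by linarith) hx]
  linear_combination hfix

lemma isFixedPt_fDelFixedPt (hα0 : 0 < α) (hα : α < 1 / 2) :
    IsFixedPt (fDel α) (fDelFixedPt α) := by
  have := fDel_sub_fDelFixedPt hα0 hα (fDelFixedPt_mem_Ioo hα0 hα)
  rw [sub_self, mul_zero, sub_eq_zero] at this
  exact this

lemma pow_mul_fDelFixedPt_mem_diff (hα0 : 0 < α) (hα : α < 1 / 2) (k : ℕ) :
    α ^ k * fDelFixedPt α ∈ Xk α k \ Xk α (k + 1) := by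
  induction k with
  | zero =>
    have hx := fDelFixedPt_mem_Ioo hα0 hα
    rw [pow_zero, one_mul, Xk_zero, zero_add, Xk_one hα0]
    refine ⟨⟨by linarith [hx.1], by linarith [hx.2]⟩, ?_⟩
    rintro (h | h)
    · linarith [h.2, hx.1]
    · linarith [h.1, hx.2]
  | succ k ih =>
    have ht := Xk_subset_Icc hα0 (by linarith) k ih.1
    rw [pow_succ', mul_assoc]
    exact ⟨(mul_mem_Xk_succ_iff hα0 hα ht).2 ih.1,
      fun h => ih.2 ((mul_mem_Xk_succ_iff hα0 hα ht).1 h)⟩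

lemma iterate_fDel_pow_mul_fDelFixedPt_mem_Icc (hα0 : 0 < α) (hα : α < 1 / 2) (k m : ℕ) :
    (fDel α)^[m] (α ^ k * fDelFixedPt α) ∈ Icc 0 1 :=
  (mapsTo_fDel_Icc hα0 hα).iterate m
    (Xk_subset_Icc hα0 (by linarith) k (pow_mul_fDelFixedPt_mem_diff hα0 hα k).1)

lemma minimalPeriod_fDel_pow_mul_fDelFixedPt (hα0 : 0 < α) (hα : α < 1 / 2) (k : ℕ) :
    minimalPeriod (fDel α) (α ^ k * fDelFixedPt α) = 2 ^ k := by
  induction k with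
  | zero => simpa [minimalPeriod_eq_one_iff_isFixedPt] using isFixedPt_fDelFixedPt hα0 hα
  | succ k ih =>
    rw [pow_succ', mul_assoc, (isRenormalization_fDel hα0 hα).minimalPeriod_mul hα0 hα
      (iterate_fDel_pow_mul_fDelFixedPt_mem_Icc hα0 hα k), ih, pow_succ']

lemma iterate_fDel_eq_iterate_fDelk (hα0 : 0 < α) (hα : α < 1 / 2) (k i : ℕ) :
    (fDel α)^[i] (α ^ k * fDelFixedPt α) = (fDelk α k)^[i] (α ^ k * fDelFixedPt α) := by
  induction k generalizing i with
  | zero =>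
    have hid : fDelk α 0 = id := funext fun x => if_pos rfl
    rw [hid, iterate_id, pow_zero, one_mul]
    exact iterate_fixed (isFixedPt_fDelFixedPt hα0 hα) i
  | succ k ih =>
    rw [pow_succ', mul_assoc]
    exact (isRenormalization_fDel hα0 hα).iterate_mul_eq (isRenormalization_fDelk hα0 hα k)
      (iterate_fDel_pow_mul_fDelFixedPt_mem_Icc hα0 hα k) ih i

lemma eq_fDelFixedPt_of_mem_periodicPts (hα0 : 0 < α) (hα : α < 1 / 2) {y : ℝ}
    (hy : y ∈ Xk α 0 \ Xk α 1) (hper : y ∈ periodicPts (fDel α)) : y = fDelFixedPt α := by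
  have hC : 1 < |(1 - α + α ^ 2) / (2 * α - 1)| := by
    rw [abs_div, abs_of_neg (by linarith : 2 * α - 1 < 0), lt_div_iff₀ (by linarith),
      abs_of_pos (by nlinarith)]
    nlinarith
  refine eq_of_mem_periodicPts_of_sub_eq_mul hC (fun x hx => fDel_sub_fDelFixedPt hα0 hα hx)
    hper fun n => ?_
  have hn := iterate_mem_diff_of_mem_periodicPts (mapsTo_fDel_Xk hα0 hα 0)
    (mapsTo_fDel_Xk hα0 hα 1) hper hy n
  rw [Xk_zero, Xk_one hα0] at hn
  obtain ⟨⟨h0, h1⟩, hn⟩ := hn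
  exact ⟨lt_of_not_ge fun hc => hn (Or.inl ⟨h0, hc⟩), lt_of_not_ge fun hc => hn (Or.inr ⟨hc, h1⟩)⟩

lemma exists_iterate_fDel_eq_of_mem_periodicPts (hα0 : 0 < α) (hα : α < 1 / 2) (k : ℕ) {y : ℝ}
    (hy : y ∈ Xk α k \ Xk α (k + 1)) (hper : y ∈ periodicPts (fDel α)) :
    ∃ i, (fDel α)^[i] (α ^ k * fDelFixedPt α) = y := by
  induction k generalizing y with
  | zero => exact ⟨0, by simpa using (eq_fDelFixedPt_of_mem_periodicPts hα0 hα hy hper).symm⟩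
  | succ k ih =>
    have hren := isRenormalization_fDel hα0 hα
    obtain ⟨n, w, hw, hyw⟩ : ∃ n w, w ∈ Xk α k ∧ (fDel α)^[n] y = α * w := by
      rcases Xk_succ hα0 k ▸ hy.1 with ⟨w, hw, rfl⟩ | ⟨t, ht, rfl⟩
      · exact ⟨0, w, hw, rfl⟩
      · exact ⟨1, fDel α t, mapsTo_fDel_Xk hα0 hα k ht,
          (hren t (Xk_subset_Icc hα0 (by linarith) k ht)).2⟩
    have hw01 := Xk_subset_Icc hα0 (by linarith) k hw
    have hyn := iterate_mem_diff_of_mem_periodicPts (mapsTo_fDel_Xk hα0 hα _)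
      (mapsTo_fDel_Xk hα0 hα _) hper hy n
    rw [hyw] at hyn
    have hwdiff : w ∈ Xk α k \ Xk α (k + 1) :=
      ⟨hw, fun h => hyn.2 ((mul_mem_Xk_succ_iff hα0 hα hw01).2 h)⟩
    have hwper : w ∈ periodicPts (fDel α) := by
      have hpos := minimalPeriod_pos_of_mem_periodicPts hper
      rw [← minimalPeriod_apply_iterate hper n, hyw, hren.minimalPeriod_mul hα0 hα
        fun m => (mapsTo_fDel_Icc hα0 hα).iterate m hw01] at hpos
      exact minimalPeriod_pos_iff_mem_periodicPts.1 (by omega)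
    obtain ⟨i, hi⟩ := ih hwdiff hwper
    obtain ⟨m, hm⟩ := exists_iterate_iterate_eq_of_mem_periodicPts hper n
    refine ⟨m + 2 * i, ?_⟩
    rw [iterate_add_apply, pow_succ', mul_assoc,
      hren.iterate_two_mul (iterate_fDel_pow_mul_fDelFixedPt_mem_Icc hα0 hα k), hi, ← hyw, hm]

end Delahaye

/-- `X_k \ X_{k+1}` contains exactly one periodic orbit of `f_α`, of (minimal) period `2^k`,
and along this orbit `f_α` agrees with `f_{α,k}`. -/
theorem stmt9 (α : ℝ) (hα1 : 0 < α) (hα2 : α < 1 / 2) (k : ℕ) :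
    ∃ x ∈ Xk α k \ Xk α (k + 1),
      Function.minimalPeriod (fDel α) x = 2 ^ k ∧
      (∀ i : ℕ, (fDel α)^[i] x = (fDelk α k)^[i] x) ∧
      ∀ y ∈ Xk α k \ Xk α (k + 1),
        (∃ p, 0 < p ∧ Function.IsPeriodicPt (fDel α) p y) →
          ∃ i : ℕ, (fDel α)^[i] x = y :=
  ⟨α ^ k * fDelFixedPt α, pow_mul_fDelFixedPt_mem_diff hα1 hα2 k,
    minimalPeriod_fDel_pow_mul_fDelFixedPt hα1 hα2 k, iterate_fDel_eq_iterate_fDelk hα1 hα2 k,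
    fun _ hy ⟨_, hp, hper⟩ =>
      exists_iterate_fDel_eq_of_mem_periodicPts hα1 hα2 k hy (mk_mem_periodicPts hp hper)⟩
end

section
/- Let h, k > 0 and u, v ∈ Σ^{k+h+2} with u_1^h = v_1^h and u_{h+1} ≠ v_{h+1}. Then the maximal distance along the adding-machine orbits, ρ_∞(u,v) = sup_{n≥0} ρ(u⊕n, v⊕n), equals ρ(0^{k+h+2}, 0^h 1 1 w) for the unique (mod 2^{k+h+2}) iterate n at which one of u⊕n, v⊕n equals 0^{k+h+2} and the other equals 0^h 1 1 w for some w ∈ Σ^k. -/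
/-- `ρ(u,v) = (1-α)|Σ (u_i - v_i)α^{i-1}|` for words of equal length. -/
noncomputable def rhoW (α : ℝ) {k : ℕ} (u v : Fin k → Bool) : ℝ := |kfin α u - kfin α v|

/-- The adding machine on `Σ^k` (add `1` with carry propagating rightward, cyclic). -/
def odoF {k : ℕ} (u : Fin k → Bool) : Fin k → Bool :=
  fun n => if ∀ i < n, u i = true then !u n else u n

/-- `ρ_∞(u,v) = max_n ρ(u⊕n, v⊕n)`. -/
noncomputable def rhoInfW (α : ℝ) {k : ℕ} (u v : Fin k → Bool) : ℝ :=
  ⨆ n : ℕ, rhoW α (odoF^[n] u) (odoF^[n] v)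

/-- The word `0^h 1 1 w` of length `k + h + 2` (0-based indexing). -/
def patW (h k : ℕ) (w : Fin k → Bool) : Fin (k + h + 2) → Bool :=
  fun i =>
    if (i : ℕ) < h then false
    else if h2 : (i : ℕ) < h + 2 then true
    else w ⟨(i : ℕ) - h - 2, by have := i.isLt; omega⟩

noncomputable def bitWeight (α : ℝ) (m x : ℕ) : ℝ :=
  ∑ i : Fin m, if x.testBit i then α ^ (i : ℕ) else 0

section bitWeight

variable {α : ℝ} {m : ℕ}

lemma bitWeight_succ (α : ℝ) (m x : ℕ) :
    bitWeight α (m + 1) x = (x % 2 : ℕ) + α * bitWeight α m (x / 2) := by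
  rw [bitWeight, Fin.sum_univ_succ, bitWeight, Finset.mul_sum]
  congr 1
  · rcases Nat.mod_two_eq_zero_or_one x with hx | hx <;> simp [Nat.testBit_zero, hx]
  · refine Finset.sum_congr rfl fun i _ => ?_
    simp only [Fin.val_succ, Nat.testBit_succ, pow_succ]
    split_ifs <;> ring

lemma bitWeight_mod_two_pow (α : ℝ) (m x : ℕ) : bitWeight α m (x % 2 ^ m) = bitWeight α m x := by
  simp [bitWeight, Nat.testBit_mod_two_pow]

lemma bitWeight_congr {x y : ℕ} (h : x ≡ y [MOD 2 ^ m]) : bitWeight α m x = bitWeight α m y := by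
  rw [← bitWeight_mod_two_pow, h, bitWeight_mod_two_pow]

lemma bitWeight_nonneg (hα : 0 ≤ α) (m x : ℕ) : 0 ≤ bitWeight α m x :=
  Finset.sum_nonneg fun _ _ => by split_ifs <;> positivity

lemma bitWeight_le_two (hα0 : 0 ≤ α) (hα : α ≤ 1 / 2) (m x : ℕ) : bitWeight α m x ≤ 2 := by
  induction m generalizing x with
  | zero => simp [bitWeight]
  | succ m ih =>
    have hbit : ((x % 2 : ℕ) : ℝ) ≤ 1 := by exact_mod_cast Nat.le_of_lt_succ (Nat.mod_lt x two_pos)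
    rw [bitWeight_succ]
    nlinarith [ih (x / 2)]

lemma bitWeight_add_le (hα0 : 0 ≤ α) (hα : α ≤ 1 / 2) (m a b : ℕ) :
    bitWeight α m (a + b) ≤ bitWeight α m a + bitWeight α m b := by
  induction m generalizing a b with
  | zero => simp [bitWeight]
  | succ m ih =>
    simp only [bitWeight_succ]
    by_cases hcarry : a % 2 = 1 ∧ b % 2 = 1
    · have hsum : (a + b) % 2 = 0 := by omega
      rw [hsum, hcarry.1, hcarry.2]
      push_cast
      nlinarith [bitWeight_le_two hα0 hα m ((a + b) / 2), bitWeight_nonneg hα0 m (a / 2),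
        bitWeight_nonneg hα0 m (b / 2)]
    · have hsum : (a + b) % 2 = a % 2 + b % 2 := by omega
      have hhalf : (a + b) / 2 = a / 2 + b / 2 := by omega
      rw [hsum, hhalf]
      push_cast
      nlinarith [ih (a / 2) (b / 2)]

lemma bitWeight_two_pow_mul (α : ℝ) (j r x : ℕ) :
    bitWeight α (j + r) (2 ^ j * x) = α ^ j * bitWeight α r x := by
  induction j with
  | zero => simp
  | succ j ih =>
    have heven : 2 ^ (j + 1) * x = 2 * (2 ^ j * x) := by ring
    rw [Nat.add_right_comm, bitWeight_succ, heven, Nat.mul_mod_right,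
      Nat.mul_div_cancel_left _ two_pos, ih]
    push_cast
    ring

lemma eq_two_pow_mul_of_mod_eq {c h a : ℕ} (hc : c % 2 ^ (h + 2) = a * 2 ^ h) :
    c = 2 ^ h * (a + 4 * (c / 2 ^ (h + 2))) := by
  nth_rewrite 1 [← Nat.mod_add_div c (2 ^ (h + 2))]
  rw [hc, pow_add]
  ring

lemma le_bitWeight_of_mod_eq (hα : 0 ≤ α) {h k c : ℕ} (hc : c % 2 ^ (h + 2) = 3 * 2 ^ h) :
    α ^ h * (1 + α) ≤ bitWeight α (k + h + 2) c := by
  set q := c / 2 ^ (h + 2)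
  rw [eq_two_pow_mul_of_mod_eq hc, show k + h + 2 = h + (k + 1 + 1) by omega,
    bitWeight_two_pow_mul, bitWeight_succ, bitWeight_succ,
    show (3 + 4 * q) % 2 = 1 by omega, show (3 + 4 * q) / 2 % 2 = 1 by omega]
  push_cast
  have := bitWeight_nonneg hα k ((3 + 4 * q) / 2 / 2)
  gcongr
  nlinarith [mul_nonneg (mul_nonneg hα hα) this]

lemma bitWeight_le_of_mod_eq (hα0 : 0 ≤ α) (hα : α ≤ 1 / 2) {h k c : ℕ}
    (hc : c % 2 ^ (h + 2) = 2 ^ h) :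
    bitWeight α (k + h + 2) c ≤ α ^ h * (1 + α) := by
  set q := c / 2 ^ (h + 2)
  rw [eq_two_pow_mul_of_mod_eq (hc.trans (one_mul _).symm),
    show k + h + 2 = h + (k + 1 + 1) by omega, bitWeight_two_pow_mul, bitWeight_succ,
    bitWeight_succ, show (1 + 4 * q) % 2 = 1 by omega, show (1 + 4 * q) / 2 % 2 = 0 by omega]
  push_cast
  have := bitWeight_le_two hα0 hα k ((1 + 4 * q) / 2 / 2)
  gcongr
  nlinarith [mul_le_mul_of_nonneg_left this (mul_nonneg hα0 hα0)]

end bitWeight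

section words

variable {α : ℝ} {m : ℕ}

lemma ofBits_injective : Function.Injective (Nat.ofBits : (Fin m → Bool) → ℕ) := by
  intro u v huv
  funext i
  have hu := Nat.testBit_ofBits_lt u i i.isLt
  rw [huv, Nat.testBit_ofBits_lt v i i.isLt] at hu
  exact hu.symm

lemma ofBits_false : Nat.ofBits (fun _ : Fin m => false) = 0 :=
  Nat.eq_of_testBit_eq fun i => by simp [Nat.testBit_ofBits]

lemma kfin_eq_bitWeight (α : ℝ) (u : Fin m → Bool) :
    kfin α u = (1 - α) * bitWeight α m (Nat.ofBits u) := by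
  simp [kfin, bitWeight, Nat.testBit_ofBits_lt]

lemma kfin_nonneg (hα0 : 0 ≤ α) (hα1 : α ≤ 1) (u : Fin m → Bool) : 0 ≤ kfin α u := by
  rw [kfin_eq_bitWeight]
  exact mul_nonneg (by linarith) (bitWeight_nonneg hα0 _ _)

lemma rhoW_comm (α : ℝ) (u v : Fin m → Bool) : rhoW α u v = rhoW α v u :=
  abs_sub_comm _ _

lemma rhoInfW_comm (α : ℝ) (u v : Fin m → Bool) : rhoInfW α u v = rhoInfW α v u := by
  simp only [rhoInfW, rhoW_comm α (odoF^[_] u)]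

lemma rhoW_false_left (hα0 : 0 ≤ α) (hα1 : α ≤ 1) (w : Fin m → Bool) :
    rhoW α (fun _ => false) w = kfin α w := by
  have hzero : kfin α (fun _ : Fin m => false) = 0 := by simp [kfin]
  rw [rhoW, hzero, zero_sub, abs_neg, abs_of_nonneg (kfin_nonneg hα0 hα1 w)]

lemma odoF_apply_zero (u : Fin (m + 1) → Bool) : odoF u 0 = !u 0 := by
  simp [odoF]

lemma odoF_comp_succ_of_false {u : Fin (m + 1) → Bool} (h0 : u 0 = false) :
    odoF u ∘ Fin.succ = u ∘ Fin.succ := by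
  funext i
  simp only [Function.comp, odoF, ite_eq_right_iff]
  intro hcarry
  simpa [h0] using hcarry 0 (Fin.succ_pos i)

lemma odoF_comp_succ_of_true {u : Fin (m + 1) → Bool} (h0 : u 0 = true) :
    odoF u ∘ Fin.succ = odoF (u ∘ Fin.succ) := by
  funext i
  simp [odoF, Fin.forall_fin_succ, h0]

lemma ofBits_odoF (u : Fin m → Bool) : Nat.ofBits (odoF u) = (Nat.ofBits u + 1) % 2 ^ m := by
  induction m with
  | zero => simp
  | succ m ih =>
    have hlt := Nat.ofBits_lt_two_pow (u ∘ Fin.succ)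
    rw [Nat.ofBits_succ, Nat.ofBits_succ u, odoF_apply_zero]
    cases h0 : u 0
    · rw [odoF_comp_succ_of_false h0, Nat.mod_eq_of_lt (by rw [pow_succ, Bool.toNat_false]; omega)]
      rfl
    · rw [odoF_comp_succ_of_true h0, ih, pow_succ, mul_comm (2 ^ m) 2, ← Nat.mul_mod_mul_left]
      rfl

lemma ofBits_iterate_odoF (u : Fin m → Bool) (n : ℕ) :
    Nat.ofBits (odoF^[n] u) = (Nat.ofBits u + n) % 2 ^ m := by
  induction n with
  | zero => simp [Nat.mod_eq_of_lt (Nat.ofBits_lt_two_pow u)]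
  | succ n ih => rw [Function.iterate_succ_apply', ofBits_odoF, ih, Nat.mod_add_mod, add_assoc]

end words

section orbit

variable {α : ℝ} {m : ℕ}

def zeroTime (u : Fin m → Bool) : ℕ := (2 ^ m - Nat.ofBits u) % 2 ^ m

lemma zeroTime_lt (u : Fin m → Bool) : zeroTime u < 2 ^ m :=
  Nat.mod_lt _ (by positivity)

lemma ofBits_add_zeroTime_modEq (u : Fin m → Bool) : Nat.ofBits u + zeroTime u ≡ 0 [MOD 2 ^ m] := by
  have hlt := Nat.ofBits_lt_two_pow u
  calc Nat.ofBits u + zeroTime u ≡ Nat.ofBits u + (2 ^ m - Nat.ofBits u) [MOD 2 ^ m] :=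
        Nat.ModEq.add_left _ (Nat.mod_modEq _ _)
    _ = 2 ^ m := by omega
    _ ≡ 0 [MOD 2 ^ m] := Nat.modEq_zero_iff_dvd.2 dvd_rfl

lemma iterate_odoF_eq_false_iff (u : Fin m → Bool) {n : ℕ} (hn : n < 2 ^ m) :
    odoF^[n] u = (fun _ => false) ↔ n = zeroTime u := by
  rw [← ofBits_injective.eq_iff, ofBits_iterate_odoF, ofBits_false]
  constructor
  · intro h
    exact (Nat.ModEq.add_left_cancel' _ (h.trans (ofBits_add_zeroTime_modEq u).symm)).eq_of_lt_of_lt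
      hn (zeroTime_lt u)
  · rintro rfl
    exact ofBits_add_zeroTime_modEq u

lemma kfin_iterate_le (hα0 : 0 ≤ α) (hα : α ≤ 1 / 2) (u v : Fin m → Bool) (n : ℕ) :
    kfin α (odoF^[n] v) ≤ kfin α (odoF^[n] u) + kfin α (odoF^[zeroTime u] v) := by
  simp only [kfin_eq_bitWeight, ofBits_iterate_odoF, bitWeight_mod_two_pow]
  rw [← mul_add]
  refine mul_le_mul_of_nonneg_left ?_ (by linarith)
  have hshift : Nat.ofBits v + n ≡ Nat.ofBits u + n + (Nat.ofBits v + zeroTime u) [MOD 2 ^ m] := by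
    have := (ofBits_add_zeroTime_modEq u).add_left (Nat.ofBits v + n)
    rw [add_zero] at this
    convert this.symm using 1
    ring
  rw [bitWeight_congr hshift]
  exact bitWeight_add_le hα0 hα _ _ _

theorem rhoInfW_eq_max (hα0 : 0 ≤ α) (hα : α ≤ 1 / 2) (u v : Fin m → Bool) :
    rhoInfW α u v = max (kfin α (odoF^[zeroTime u] v)) (kfin α (odoF^[zeroTime v] u)) := by
  have hbound : ∀ n, rhoW α (odoF^[n] u) (odoF^[n] v) ≤
      max (kfin α (odoF^[zeroTime u] v)) (kfin α (odoF^[zeroTime v] u)) := fun n =>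
    abs_sub_le_iff.2
      ⟨by linarith [kfin_iterate_le hα0 hα v u n,
          le_max_right (kfin α (odoF^[zeroTime u] v)) (kfin α (odoF^[zeroTime v] u))],
        by linarith [kfin_iterate_le hα0 hα u v n,
          le_max_left (kfin α (odoF^[zeroTime u] v)) (kfin α (odoF^[zeroTime v] u))]⟩
  have hattained (a b : Fin m → Bool) :
      rhoW α (odoF^[zeroTime a] a) (odoF^[zeroTime a] b) = kfin α (odoF^[zeroTime a] b) := by
    rw [(iterate_odoF_eq_false_iff a (zeroTime_lt a)).2 rfl, rhoW_false_left hα0 (by linarith)]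
  have hbdd : BddAbove (Set.range fun n => rhoW α (odoF^[n] u) (odoF^[n] v)) :=
    ⟨_, Set.forall_mem_range.2 hbound⟩
  refine le_antisymm (ciSup_le hbound) (max_le ?_ ?_)
  · rw [← hattained]
    exact le_ciSup hbdd _
  · rw [← hattained, rhoW_comm]
    exact le_ciSup hbdd _

lemma ofBits_iterate_zeroTime_modEq (u v : Fin m → Bool) :
    (Nat.ofBits (odoF^[zeroTime u] v) : ℤ) ≡ Nat.ofBits v - Nat.ofBits u [ZMOD 2 ^ m] := by
  have hnat : Nat.ofBits (odoF^[zeroTime u] v) + Nat.ofBits u ≡ Nat.ofBits v [MOD 2 ^ m] := by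
    rw [ofBits_iterate_odoF]
    calc (Nat.ofBits v + zeroTime u) % 2 ^ m + Nat.ofBits u
        ≡ Nat.ofBits v + (Nat.ofBits u + zeroTime u) [MOD 2 ^ m] := by
          convert (Nat.mod_modEq (Nat.ofBits v + zeroTime u) (2 ^ m)).add_right (Nat.ofBits u)
            using 1
          ring
      _ ≡ Nat.ofBits v + 0 [MOD 2 ^ m] := (ofBits_add_zeroTime_modEq u).add_left _
  have hint := (Int.natCast_modEq_iff.2 hnat).sub_right (Nat.ofBits u : ℤ)
  push_cast at hint
  simpa using hint

end orbit

lemma ofBits_patW (h k : ℕ) (w : Fin k → Bool) :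
    Nat.ofBits (patW h k w) = 2 ^ h * (3 + 4 * Nat.ofBits w) := by
  induction h with
  | zero =>
    have htail : (patW 0 k w ∘ Fin.succ) ∘ Fin.succ = w := by
      funext i
      simp only [Function.comp, patW, Fin.val_succ]
      rw [if_neg (by omega), dif_neg (by omega)]
      congr 1
    have hbits : patW 0 k w 0 = true ∧ (patW 0 k w ∘ Fin.succ) 0 = true := ⟨rfl, rfl⟩
    rw [Nat.ofBits_succ, Nat.ofBits_succ, htail, hbits.1, hbits.2, Bool.toNat_true]
    ring
  | succ h ih =>
    have htail : patW (h + 1) k w ∘ Fin.succ = patW h k w := by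
      funext i
      simp only [Function.comp, patW, Fin.val_succ]
      congr 1 <;> grind
    have hbit : patW (h + 1) k w 0 = false := rfl
    rw [Nat.ofBits_succ, htail, ih, hbit, Bool.toNat_false, pow_succ]
    ring

lemma exists_eq_patW_iff {h k : ℕ} (x : Fin (k + h + 2) → Bool) :
    (∃ w, x = patW h k w) ↔ Nat.ofBits x % 2 ^ (h + 2) = 3 * 2 ^ h := by
  constructor
  · rintro ⟨w, rfl⟩
    rw [ofBits_patW, pow_add, Nat.mul_mod_mul_left, mul_comm]
    congr 1
    omega
  · intro hx
    refine ⟨fun i => (Nat.ofBits x / 2 ^ (h + 2)).testBit i, ofBits_injective ?_⟩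
    have hquot : Nat.ofBits x / 2 ^ (h + 2) < 2 ^ k := by
      rw [Nat.div_lt_iff_lt_mul (by positivity), ← pow_add]
      exact Nat.ofBits_lt_two_pow x
    rw [ofBits_patW, Nat.ofBits_testBit, Nat.mod_eq_of_lt hquot]
    exact eq_two_pow_mul_of_mod_eq hx

lemma Int.sub_emod_two_pow_add_two {a b : ℤ} {h : ℕ} (hlow : a % 2 ^ h = b % 2 ^ h)
    (hbit : a / 2 ^ h % 2 ≠ b / 2 ^ h % 2) :
    (a - b) % 2 ^ (h + 2) = 3 * 2 ^ h ∧ (b - a) % 2 ^ (h + 2) = 2 ^ h ∨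
      (a - b) % 2 ^ (h + 2) = 2 ^ h ∧ (b - a) % 2 ^ (h + 2) = 3 * 2 ^ h := by
  have hab : a - b = 2 ^ h * (a / 2 ^ h - b / 2 ^ h) := by
    have ha := Int.emod_add_mul_ediv a (2 ^ h)
    have hb := Int.emod_add_mul_ediv b (2 ^ h)
    rw [hlow] at ha
    linear_combination hb - ha
  have hmod (s : ℤ) : 2 ^ h * s % 2 ^ (h + 2) = s % 4 * 2 ^ h := by
    rw [pow_add, Int.mul_emod_mul_of_pos _ _ (by positivity), mul_comm]
    norm_num
  set t := a / 2 ^ h - b / 2 ^ h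
  rw [hab, show b - a = 2 ^ h * -t by linear_combination -hab, hmod, hmod]
  have ht : t % 4 = 3 ∧ -t % 4 = 1 ∨ t % 4 = 1 ∧ -t % 4 = 3 := by omega
  rcases ht with ⟨h1, h2⟩ | ⟨h1, h2⟩
  · left; rw [h1, h2]; norm_num
  · right; rw [h1, h2]; norm_num

lemma ofBits_iterate_zeroTime_mod_cases {m h : ℕ} (hm : h + 2 ≤ m) (u v : Fin m → Bool)
    (hpre : ∀ i : Fin m, (i : ℕ) < h → u i = v i)
    (hdiff : u ⟨h, by omega⟩ ≠ v ⟨h, by omega⟩) :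
    Nat.ofBits (odoF^[zeroTime u] v) % 2 ^ (h + 2) = 3 * 2 ^ h ∧
        Nat.ofBits (odoF^[zeroTime v] u) % 2 ^ (h + 2) = 2 ^ h ∨
      Nat.ofBits (odoF^[zeroTime u] v) % 2 ^ (h + 2) = 2 ^ h ∧
        Nat.ofBits (odoF^[zeroTime v] u) % 2 ^ (h + 2) = 3 * 2 ^ h := by
  have hlow : Nat.ofBits v % 2 ^ h = Nat.ofBits u % 2 ^ h :=
    Nat.eq_of_testBit_eq fun i => by
      simp only [Nat.testBit_mod_two_pow]
      by_cases hi : i < h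
      · rw [Nat.testBit_ofBits_lt _ _ (by omega), Nat.testBit_ofBits_lt _ _ (by omega),
          hpre ⟨i, by omega⟩ hi]
      · simp [hi]
  have hbit : Nat.ofBits v / 2 ^ h % 2 ≠ Nat.ofBits u / 2 ^ h % 2 := fun hEq => hdiff <| by
    rw [← Nat.testBit_ofBits_lt u h (by omega), ← Nat.testBit_ofBits_lt v h (by omega),
      Nat.testBit_eq_decide_div_mod_eq, Nat.testBit_eq_decide_div_mod_eq, hEq]
  have hdvd : (2 : ℤ) ^ (h + 2) ∣ 2 ^ m := pow_dvd_pow 2 hm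
  have hp := (ofBits_iterate_zeroTime_modEq u v).of_dvd hdvd
  have hq := (ofBits_iterate_zeroTime_modEq v u).of_dvd hdvd
  unfold Int.ModEq at hp hq
  zify at hlow hbit ⊢
  rw [hp, hq]
  exact Int.sub_emod_two_pow_add_two hlow hbit

def IsZeroPatternTime (h k : ℕ) (u v : Fin (k + h + 2) → Bool) (n : ℕ) (w : Fin k → Bool) :
    Prop :=
  (odoF^[n] u = (fun _ => false) ∧ odoF^[n] v = patW h k w) ∨
    (odoF^[n] v = (fun _ => false) ∧ odoF^[n] u = patW h k w)

theorem exists_isZeroPatternTime_rhoInfW_eq {α : ℝ} (hα0 : 0 ≤ α) (hα : α ≤ 1 / 2) {h k : ℕ}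
    (u v : Fin (k + h + 2) → Bool)
    (hp : Nat.ofBits (odoF^[zeroTime u] v) % 2 ^ (h + 2) = 3 * 2 ^ h)
    (hq : Nat.ofBits (odoF^[zeroTime v] u) % 2 ^ (h + 2) = 2 ^ h) :
    ∃ n < 2 ^ (k + h + 2), ∃ w : Fin k → Bool, IsZeroPatternTime h k u v n w ∧
      rhoInfW α u v = rhoW α (fun _ => false) (patW h k w) ∧
      ∀ n' < 2 ^ (k + h + 2), ∀ w' : Fin k → Bool, IsZeroPatternTime h k u v n' w' → n' = n := by
  obtain ⟨w, hw⟩ := (exists_eq_patW_iff _).2 hp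
  refine ⟨zeroTime u, zeroTime_lt u, w,
    Or.inl ⟨(iterate_odoF_eq_false_iff u (zeroTime_lt u)).2 rfl, hw⟩, ?_, ?_⟩
  · have hle : kfin α (odoF^[zeroTime v] u) ≤ kfin α (odoF^[zeroTime u] v) := by
      rw [kfin_eq_bitWeight, kfin_eq_bitWeight]
      exact mul_le_mul_of_nonneg_left
        ((bitWeight_le_of_mod_eq hα0 hα hq).trans (le_bitWeight_of_mod_eq hα0 hp)) (by linarith)
    rw [rhoInfW_eq_max hα0 hα, max_eq_left hle, hw, rhoW_false_left hα0 (by linarith)]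
  · rintro n' hn' w' (⟨hzero, -⟩ | ⟨hzero, hpat⟩)
    · exact (iterate_odoF_eq_false_iff u hn').1 hzero
    · rw [(iterate_odoF_eq_false_iff v hn').1 hzero] at hpat
      have hpat_mod := (exists_eq_patW_iff _).1 ⟨w', hpat⟩
      have hpos : 0 < 2 ^ h := by positivity
      omega

/-- If `u, v ∈ Σ^{k+h+2}` agree on the first `h` letters and differ at the `(h+1)`st, then
`ρ_∞(u,v) = ρ(0^{k+h+2}, 0^h 1 1 w)` where `n` (unique mod `2^{k+h+2}`) is the iterate at
which one of `u⊕n, v⊕n` equals `0^{k+h+2}` and the other equals `0^h 1 1 w`. -/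
theorem stmt11 (α : ℝ) (hα1 : 0 < α) (hα2 : α < 1 / 2) (h k : ℕ)
    (u v : Fin (k + h + 2) → Bool)
    (hpre : ∀ i : Fin (k + h + 2), (i : ℕ) < h → u i = v i)
    (hdiff : u ⟨h, by omega⟩ ≠ v ⟨h, by omega⟩) :
    ∃ n < 2 ^ (k + h + 2), ∃ w : Fin k → Bool,
      ((odoF^[n] u = (fun _ => false) ∧ odoF^[n] v = patW h k w) ∨
        (odoF^[n] v = (fun _ => false) ∧ odoF^[n] u = patW h k w)) ∧
      rhoInfW α u v = rhoW α (fun _ => false) (patW h k w) ∧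
      ∀ n' < 2 ^ (k + h + 2), ∀ w' : Fin k → Bool,
        ((odoF^[n'] u = (fun _ => false) ∧ odoF^[n'] v = patW h k w') ∨
          (odoF^[n'] v = (fun _ => false) ∧ odoF^[n'] u = patW h k w')) → n' = n := by
  rcases ofBits_iterate_zeroTime_mod_cases (by omega) u v hpre hdiff with ⟨hp, hq⟩ | ⟨hp, hq⟩
  · exact exists_isZeroPatternTime_rhoInfW_eq hα1.le hα2.le u v hp hq
  · obtain ⟨n, hn, w, hnw, hρ, huniq⟩ := exists_isZeroPatternTime_rhoInfW_eq hα1.le hα2.le v u hq hp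
    exact ⟨n, hn, w, hnw.symm, by rw [rhoInfW_comm, hρ],
      fun n' hn' w' hn'w' => huniq n' hn' w' hn'w'.symm⟩
end

section
/- If 1/3 < α < 1/2 and 0 < ε < 1, then there exist k > 0 and words u, v ∈ Σ^k such that ρ(u,v) ≤ ε and ρ_∞(u,v) > ε. -/
/-!
Read a word of `Σ^k` as the binary digits of a natural number, least significant first; the adding
machine then becomes `a ↦ a + 1 (mod 2^k)`, and `kfin` of the digits of `2^t` and of `2^k - 2^t`
are `(1 - α) α^t` and `α^t - α^k`. A long carry moves close words far apart:
* `2^j` and `2^(j+1)` are at distance `(1 - α)^2 α^j`, but after `2^k - 2^(j+1)` steps they become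
  `2^k - 2^j` and `0`, at distance `α^j - α^k`;
* `2^j` and `2^k - 2^(j+1)` are at distance `(1 - 2α) α^j + α^k`, and after `2^j` steps at
  distance `α^j - α^k - (1 - α) α^(j+1)`.
Once `α > 1/3` and `k - j` is large, the intervals between the two distances of a pair, over all
`j` and both pairs, cover `(0, 1)`.
-/

open Finset Filter

theorem Nat.testBit_succ_eq_ite (a n : ℕ) :
    (a + 1).testBit n = if ∀ i < n, a.testBit i then !a.testBit n else a.testBit n := by
  induction n generalizing a with
  | zero =>
    rcases Nat.mod_two_eq_zero_or_one a with h | h <;>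
      simp [Nat.testBit_zero, h, Nat.succ_mod_two_eq_one_iff]
  | succ n ih =>
    simp only [Nat.forall_lt_succ_left, Nat.testBit_add_one]
    obtain ⟨b, rfl | rfl⟩ := Nat.even_or_odd' a
    · have hb : (2 * b + 1) / 2 = b := by omega
      simp [Nat.testBit_zero, hb]
    · have hb : (2 * b + 1 + 1) / 2 = b + 1 := by omega
      have hb' : (2 * b + 1) / 2 = b := by omega
      simp [Nat.testBit_zero, hb, hb', ih]

def binWord (k a : ℕ) : Fin k → Bool := fun i => a.testBit i

section binWord

variable {k : ℕ}

theorem odoF_binWord (a : ℕ) : odoF (binWord k a) = binWord k (a + 1) := by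
  funext n
  simp only [odoF, binWord, Nat.testBit_succ_eq_ite]
  congr 1
  exact propext ⟨fun h i hi => h ⟨i, hi.trans n.isLt⟩ hi, fun h i hi => h i hi⟩

theorem odoF_iterate_binWord (a n : ℕ) : odoF^[n] (binWord k a) = binWord k (a + n) := by
  induction n with
  | zero => rfl
  | succ n ih => rw [Function.iterate_succ_apply', ih, odoF_binWord, Nat.add_assoc]

variable (α : ℝ)

theorem kfin_binWord (a : ℕ) :
    kfin α (binWord k a) = (1 - α) * ∑ i ∈ range k with a.testBit i, α ^ i := by
  rw [kfin, sum_filter, ← Fin.sum_univ_eq_sum_range (fun i => if a.testBit i then α ^ i else 0)]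
  rfl

theorem kfin_binWord_two_pow {t : ℕ} (ht : t < k) :
    kfin α (binWord k (2 ^ t)) = (1 - α) * α ^ t := by
  have : {i ∈ range k | (2 ^ t).testBit i} = {t} := by
    ext i
    simp only [mem_filter, mem_range, Nat.testBit_two_pow, decide_eq_true_eq, mem_singleton]
    omega
  rw [kfin_binWord, this, sum_singleton]

theorem kfin_binWord_two_pow_sub_two_pow {t : ℕ} (ht : t ≤ k) :
    kfin α (binWord k (2 ^ k - 2 ^ t)) = α ^ t - α ^ k := by
  have hbits : 2 ^ k - 2 ^ t = 2 ^ t * (2 ^ (k - t) - 1) := by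
    rw [Nat.mul_sub_one, ← pow_add, Nat.add_sub_cancel' ht]
  have : {i ∈ range k | (2 ^ k - 2 ^ t).testBit i} = Ico t k := by
    ext i
    simp only [hbits, mem_filter, mem_range, Nat.testBit_two_pow_mul, Nat.testBit_two_pow_sub_one,
      Bool.and_eq_true, decide_eq_true_eq, mem_Ico]
    omega
  rw [kfin_binWord, this, mul_comm, geom_sum_Ico_mul_neg α ht]

theorem kfin_binWord_two_pow_self : kfin α (binWord k (2 ^ k)) = 0 := by
  have : {i ∈ range k | (2 ^ k).testBit i} = ∅ := by
    ext i
    simp only [mem_filter, mem_range, Nat.testBit_two_pow, decide_eq_true_eq, notMem_empty,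
      iff_false, not_and]
    omega
  rw [kfin_binWord, this, sum_empty, mul_zero]

end binWord

theorem rhoW_iterate_le_rhoInfW (α : ℝ) {k : ℕ} (u v : Fin k → Bool) (n : ℕ) :
    rhoW α (odoF^[n] u) (odoF^[n] v) ≤ rhoInfW α u v := by
  have hfin := Set.finite_range fun p : (Fin k → Bool) × (Fin k → Bool) => rhoW α p.1 p.2
  refine le_ciSup (f := fun n => rhoW α (odoF^[n] u) (odoF^[n] v)) (hfin.bddAbove.mono ?_) n
  rintro _ ⟨n, rfl⟩
  exact ⟨(odoF^[n] u, odoF^[n] v), rfl⟩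

theorem exists_mul_pow_le_lt_mul_pow {r c d ε : ℝ} (hr0 : 0 < r) (hr1 : r < 1) (hcd : c < r * d)
    (hε : 0 < ε) (hεd : ε < d) : ∃ j : ℕ, c * r ^ j ≤ ε ∧ ε < d * r ^ j := by
  classical
  have hex : ∃ j : ℕ, c * r ^ j ≤ ε :=
    ((((tendsto_pow_atTop_nhds_zero_of_lt_one hr0.le hr1).const_mul c).eventually
      (ge_mem_nhds (by simpa using hε))).exists)
  refine ⟨Nat.find hex, Nat.find_spec hex, ?_⟩
  rcases h : Nat.find hex with _ | i
  · simpa using hεd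
  · calc ε < c * r ^ i := not_le.1 (Nat.find_min hex (by omega))
      _ ≤ r * d * r ^ i := by gcongr
      _ = d * r ^ (i + 1) := by ring

theorem Nat.two_pow_sub_two_pow_succ_add_two_pow {j k : ℕ} (h : j < k) :
    2 ^ k - 2 ^ (j + 1) + 2 ^ j = 2 ^ k - 2 ^ j := by
  have : 2 ^ (j + 1) ≤ 2 ^ k := Nat.pow_le_pow_right two_pos h
  rw [pow_succ] at *
  omega

section witnesses

variable {α ε : ℝ} {j k : ℕ}

theorem exists_rhoW_le_lt_rhoInfW_of_carry_shift (hα0 : 0 ≤ α) (hα : α ≤ 1 / 2)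
    (hjk : j + 1 < k) (hle : (1 - 2 * α) * α ^ j + α ^ k ≤ ε)
    (hlt : ε < α ^ j - α ^ k - (1 - α) * α ^ (j + 1)) :
    ∃ u v : Fin k → Bool, rhoW α u v ≤ ε ∧ ε < rhoInfW α u v := by
  refine ⟨binWord k (2 ^ j), binWord k (2 ^ k - 2 ^ (j + 1)), ?_, ?_⟩
  · have hdiff : kfin α (binWord k (2 ^ j)) - kfin α (binWord k (2 ^ k - 2 ^ (j + 1)))
        = (1 - 2 * α) * α ^ j + α ^ k := by
      rw [kfin_binWord_two_pow α (Nat.lt_of_succ_lt hjk),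
        kfin_binWord_two_pow_sub_two_pow α hjk.le]
      ring
    rw [rhoW, hdiff, abs_of_nonneg
      (add_nonneg (mul_nonneg (by linarith) (pow_nonneg hα0 j)) (pow_nonneg hα0 k))]
    exact hle
  · calc ε < α ^ j - α ^ k - (1 - α) * α ^ (j + 1) := hlt
      _ ≤ |kfin α (binWord k (2 ^ (j + 1))) - kfin α (binWord k (2 ^ k - 2 ^ j))| := by
        rw [kfin_binWord_two_pow α hjk, kfin_binWord_two_pow_sub_two_pow α (by omega : j ≤ k),
          abs_sub_comm]
        exact le_abs_self _
      _ = rhoW α (odoF^[2 ^ j] (binWord k (2 ^ j)))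
            (odoF^[2 ^ j] (binWord k (2 ^ k - 2 ^ (j + 1)))) := by
        rw [odoF_iterate_binWord, odoF_iterate_binWord, ← Nat.two_pow_succ,
          Nat.two_pow_sub_two_pow_succ_add_two_pow (Nat.lt_of_succ_lt hjk), rhoW]
      _ ≤ rhoInfW α (binWord k (2 ^ j)) (binWord k (2 ^ k - 2 ^ (j + 1))) :=
        rhoW_iterate_le_rhoInfW α _ _ _

theorem exists_rhoW_le_lt_rhoInfW_of_wrap_shift (hα0 : 0 ≤ α) (hjk : j + 1 < k)
    (hle : (1 - α) ^ 2 * α ^ j ≤ ε) (hlt : ε < α ^ j - α ^ k) :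
    ∃ u v : Fin k → Bool, rhoW α u v ≤ ε ∧ ε < rhoInfW α u v := by
  refine ⟨binWord k (2 ^ j), binWord k (2 ^ (j + 1)), ?_, ?_⟩
  · have hdiff : kfin α (binWord k (2 ^ j)) - kfin α (binWord k (2 ^ (j + 1)))
        = (1 - α) ^ 2 * α ^ j := by
      rw [kfin_binWord_two_pow α (Nat.lt_of_succ_lt hjk), kfin_binWord_two_pow α hjk]
      ring
    rw [rhoW, hdiff, abs_of_nonneg (by positivity)]
    exact hle
  · calc ε < α ^ j - α ^ k := hlt
      _ ≤ |kfin α (binWord k (2 ^ k - 2 ^ j)) - kfin α (binWord k (2 ^ k))| := by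
        rw [kfin_binWord_two_pow_sub_two_pow α (by omega : j ≤ k), kfin_binWord_two_pow_self,
          sub_zero]
        exact le_abs_self _
      _ = rhoW α (odoF^[2 ^ k - 2 ^ (j + 1)] (binWord k (2 ^ j)))
            (odoF^[2 ^ k - 2 ^ (j + 1)] (binWord k (2 ^ (j + 1)))) := by
        rw [odoF_iterate_binWord, odoF_iterate_binWord, add_comm (2 ^ j),
          Nat.two_pow_sub_two_pow_succ_add_two_pow (Nat.lt_of_succ_lt hjk),
          Nat.add_sub_cancel' (Nat.pow_le_pow_right two_pos hjk.le), rhoW]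
      _ ≤ rhoInfW α (binWord k (2 ^ j)) (binWord k (2 ^ (j + 1))) :=
        rhoW_iterate_le_rhoInfW α _ _ _

end witnesses

/-- For `1/3 < α < 1/2` and `0 < ε < 1` there are `k > 0` and `u, v ∈ Σ^k` with
`ρ(u,v) ≤ ε` and `ρ_∞(u,v) > ε`. -/
theorem stmt13 (α : ℝ) (hα1 : 1 / 3 < α) (hα2 : α < 1 / 2)
    (ε : ℝ) (hε1 : 0 < ε) (hε2 : ε < 1) :
    ∃ k : ℕ, 0 < k ∧ ∃ u v : Fin k → Bool, rhoW α u v ≤ ε ∧ rhoInfW α u v > ε := by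
  have hα0 : 0 < α := by linarith
  have hpow := tendsto_pow_atTop_nhds_zero_of_lt_one hα0.le (by linarith : α < 1)
  obtain ⟨m, hm2, hmα, hmε⟩ := ((eventually_ge_atTop 2).and
    ((hpow.eventually (gt_mem_nhds (by linarith : (0 : ℝ) < (3 * α - 1) / 2))).and
      (hpow.eventually (gt_mem_nhds (by linarith : (0 : ℝ) < 1 - ε))))).exists
  set δ := α ^ m
  have hδ0 : 0 < δ := pow_pos hα0 m
  have hδα : δ ≤ α := pow_le_of_le_one hα0.le (by linarith) (by omega)
  -- `δ < (3α - 1)/2` makes consecutive intervals `[c αʲ, d αʲ)` overlap.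
  obtain ⟨j, hjc, hjd⟩ := exists_mul_pow_le_lt_mul_pow (c := 1 - 2 * α + δ) (d := 1 - δ)
    hα0 (by linarith) (by nlinarith) hε1 (by linarith)
  have hαj : 0 < α ^ j := pow_pos hα0 j
  have hk : α ^ (j + m) = α ^ j * δ := pow_add α j m
  refine ⟨j + m, by omega, ?_⟩
  by_cases h : ε < (1 - α + α ^ 2 - δ) * α ^ j
  · exact exists_rhoW_le_lt_rhoInfW_of_carry_shift (j := j) hα0.le hα2.le (by omega)
      (by rw [hk]; linarith) (by rw [hk, pow_succ]; linarith)
  · exact exists_rhoW_le_lt_rhoInfW_of_wrap_shift (j := j) hα0.le (by omega)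
      (by nlinarith) (by rw [hk]; linarith)
end

section
/- Let (a_i) be the gap sequence a_{2^j(2m+1)} = (1/α)^j for 0 < α < 1/2, and let A(m,n) = Σ_{i=m}^{m+n−1} a_i. Then for all n, s > 0, A(1,n) ≤ A(s,n); i.e., the sum of the first n terms is minimal among all sums of n consecutive terms. -/
/-- The gap sequence: `a_i = (1/α)^j` where `i = 2^j(2m+1)`. -/
noncomputable def gapSeq (α : ℝ) (i : ℕ) : ℝ := α⁻¹ ^ padicValNat 2 i

/-- `A(m,n) = Σ_{i=m}^{m+n-1} a_i`. -/
noncomputable def gapSum (α : ℝ) (m n : ℕ) : ℝ := ∑ i ∈ Finset.Ico m (m + n), gapSeq α i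

/-!
Writing `f (v_p i) = f 0 + ∑_{k < v_p i} (f (k + 1) - f k)` turns a sum of `f ∘ v_p` over a window
of `n` consecutive integers into `n • f 0` plus a combination, with the nonnegative coefficients
`f (k + 1) - f k` of a monotone `f`, of the numbers of multiples of `p ^ (k + 1)` in the window.
A window `(t, t + n]` contains `⌊(t + n)/d⌋ - ⌊t/d⌋ ≥ ⌊n/d⌋` multiples of `d`, and `(0, n]` attains
this minimum. The gap sequence is the case `p = 2`, `f v = (1/α)^v`.
-/

open Finset

namespace Nat

theorem card_Ioc_filter_dvd (t n d : ℕ) :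
    #{i ∈ Ioc t (t + n) | d ∣ i} = (t + n) / d - t / d := by
  have hsplit : #{i ∈ Ioc 0 t | d ∣ i} + #{i ∈ Ioc t (t + n) | d ∣ i}
      = #{i ∈ Ioc 0 (t + n) | d ∣ i} := by
    rw [← card_union_of_disjoint (disjoint_filter_filter (Ioc_disjoint_Ioc_of_le le_rfl)),
      ← filter_union, Ioc_union_Ioc_eq_Ioc (Nat.zero_le t) (Nat.le_add_right t n)]
  rw [Ioc_filter_dvd_card_eq_div, Ioc_filter_dvd_card_eq_div] at hsplit
  omega

theorem card_Ioc_filter_dvd_le (t n d : ℕ) :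
    #{i ∈ Ioc 0 n | d ∣ i} ≤ #{i ∈ Ioc t (t + n) | d ∣ i} := by
  rw [Ioc_filter_dvd_card_eq_div, card_Ioc_filter_dvd,
    Nat.le_sub_iff_add_le' (Nat.div_le_div_right (Nat.le_add_right t n))]
  exact Nat.div_add_div_le_add_div

end Nat

section PadicValWindow

variable {M : Type*} [AddCommGroup M]

theorem apply_padicValNat_eq_sum {p : ℕ} (hp : p ≠ 1) (f : ℕ → M) {i K : ℕ} (hi : i ≠ 0)
    (hK : padicValNat p i ≤ K) :
    f (padicValNat p i) = f 0 + ∑ k ∈ range K, if p ^ (k + 1) ∣ i then f (k + 1) - f k else 0 := by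
  have hfilter : {k ∈ range K | p ^ (k + 1) ∣ i} = range (padicValNat p i) := by
    ext k
    rw [mem_filter, mem_range, mem_range, padicValNat_dvd_iff_le_of_ne_one hp hi]
    omega
  rw [← sum_filter, hfilter, sum_range_sub, add_sub_cancel]

theorem sum_Ioc_apply_padicValNat {p : ℕ} (hp : p ≠ 1) (f : ℕ → M) {t n K : ℕ}
    (hK : t + n ≤ K) :
    ∑ i ∈ Ioc t (t + n), f (padicValNat p i) =
      n • f 0 + ∑ k ∈ range K, #{i ∈ Ioc t (t + n) | p ^ (k + 1) ∣ i} • (f (k + 1) - f k) := by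
  calc ∑ i ∈ Ioc t (t + n), f (padicValNat p i)
      = ∑ i ∈ Ioc t (t + n),
          (f 0 + ∑ k ∈ range K, if p ^ (k + 1) ∣ i then f (k + 1) - f k else 0) := by
        refine sum_congr rfl fun i hi => ?_
        rw [mem_Ioc] at hi
        exact apply_padicValNat_eq_sum hp f (by omega)
          ((Nat.padicValNat_le_self i).trans (hi.2.trans hK))
    _ = n • f 0 + ∑ k ∈ range K, #{i ∈ Ioc t (t + n) | p ^ (k + 1) ∣ i} • (f (k + 1) - f k) := by
        rw [sum_add_distrib, sum_const, Nat.card_Ioc, Nat.add_sub_cancel_left, sum_comm]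
        simp only [← sum_filter, sum_const]

theorem sum_Ioc_apply_padicValNat_le [PartialOrder M] [IsOrderedAddMonoid M] {p : ℕ} (hp : p ≠ 1)
    {f : ℕ → M} (hf : Monotone f) (t n : ℕ) :
    ∑ i ∈ Ioc 0 n, f (padicValNat p i) ≤ ∑ i ∈ Ioc t (t + n), f (padicValNat p i) := by
  have h0 := sum_Ioc_apply_padicValNat hp f (t := 0) (n := n) (K := t + n) (by omega)
  rw [zero_add] at h0
  rw [h0, sum_Ioc_apply_padicValNat hp f le_rfl]
  refine add_le_add_right (sum_le_sum fun k _ => ?_) _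
  exact nsmul_le_nsmul_left (sub_nonneg.2 (hf k.le_succ)) (Nat.card_Ioc_filter_dvd_le t n _)

end PadicValWindow

theorem stmt15_general (α : ℝ) (hα1 : 0 < α) (hα2 : α < 1 / 2) (n s : ℕ) (hs : 0 < s) :
    gapSum α 1 n ≤ gapSum α s n := by
  have hβ : 1 ≤ α⁻¹ := one_le_inv₀ hα1 |>.2 (by linarith)
  have hwindow (m : ℕ) (hm : 0 < m) :
      gapSum α m n = ∑ i ∈ Ioc (m - 1) (m - 1 + n), α⁻¹ ^ padicValNat 2 i := by
    refine sum_congr (ext fun i => ?_) fun _ _ => rfl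
    simp only [mem_Ico, mem_Ioc]
    omega
  rw [hwindow 1 one_pos, hwindow s hs, Nat.sub_self, zero_add]
  exact sum_Ioc_apply_padicValNat_le (p := 2) (by decide) (pow_right_mono₀ hβ) (s - 1) n

/-- The sum of the first `n` terms of the gap sequence is minimal among all sums of `n`
consecutive terms: `A(1,n) ≤ A(s,n)` for all `n, s > 0`. -/
theorem stmt15 (α : ℝ) (hα1 : 0 < α) (hα2 : α < 1 / 2) (n s : ℕ) (hn : 0 < n) (hs : 0 < s) :
    gapSum α 1 n ≤ gapSum α s n :=
  stmt15_general α hα1 hα2 n s hs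
end

section
/- Let (a_i) be the gap sequence and A(m,n) = Σ_{i=m}^{m+n−1} a_i. Let m ≥ 0, s > m, t ≥ 0, 2^m < n ≤ 2^s and 0 ≤ h < 2^m. Then A(2^m, n − 2^m) ≥ A(2^m + t·2^s − h, n − 2^m). -/
/-!
Both windows have length `L = n - 2^m`. Since `n ≤ 2^s`, the `2`-adic valuation is
`2^s`-periodic along the shifted window, so it may be moved to start at `2^m - h ∈ [1, 2^m]`.
Writing `α^{-v} = 1 + Σ_{k < v} (α^{-(k+1)} - α^{-k})` with nonnegative
increments, a window sum is `L` plus a nonnegative combination of the numbers of multiples of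
`2^(k+1)` in the window, so it suffices to compare these counts. For `2^k ∣ 2^m` the window
starting at `2^m` has the most multiples of `2^k` among all windows of length `L`; for
`2^k ≥ 2^m` every multiple of `2^k` in `[2^m - h, n - h)` already lies in `[2^m, n)`.
-/

open Finset

namespace Finset

variable {ι κ M : Type*} [AddCommGroup M]

theorem sum_comp_eq_card_smul_add_sum_card_filter_smul (s : Finset ι) (f : ι → ℕ) (g : ℕ → M)
    {N : ℕ} (hN : ∀ i ∈ s, f i ≤ N) :
    ∑ i ∈ s, g (f i)
      = #s • g 0 + ∑ k ∈ range N, #{i ∈ s | k + 1 ≤ f i} • (g (k + 1) - g k) := by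
  have hexpand : ∀ i ∈ s, g (f i)
      = g 0 + ∑ k ∈ range N, if k + 1 ≤ f i then g (k + 1) - g k else 0 := by
    intro i hi
    have hrange : {k ∈ range N | k + 1 ≤ f i} = range (f i) := by
      ext k
      simp only [mem_filter, mem_range]
      have := hN i hi
      omega
    rw [← sum_filter, hrange, sum_range_sub, add_sub_cancel]
  simp_rw [sum_congr rfl hexpand, sum_add_distrib, sum_const, sum_comm (s := s), ← sum_filter,
    sum_const]

theorem sum_comp_le_sum_comp_of_card_filter_le [PartialOrder M] [IsOrderedAddMonoid M]
    {s : Finset ι} {t : Finset κ} {f : ι → ℕ} {f' : κ → ℕ} {g : ℕ → M} (hg : Monotone g) (hg0 : 0 ≤ g 0)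
    (h : ∀ k, #{i ∈ s | k ≤ f i} ≤ #{j ∈ t | k ≤ f' j}) :
    ∑ i ∈ s, g (f i) ≤ ∑ j ∈ t, g (f' j) := by
  set N := s.sup f ⊔ t.sup f'
  rw [sum_comp_eq_card_smul_add_sum_card_filter_smul s f g
      (N := N) fun i hi => le_sup_of_le_left (le_sup hi),
    sum_comp_eq_card_smul_add_sum_card_filter_smul t f' g
      (N := N) fun j hj => le_sup_of_le_right (le_sup hj)]
  have hcard : #s ≤ #t := by simpa using h 0
  refine add_le_add (nsmul_le_nsmul_left hg0 hcard) (sum_le_sum fun k _ => ?_)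
  exact nsmul_le_nsmul_left (sub_nonneg.mpr (hg k.le_succ)) (h (k + 1))

end Finset

theorem card_filter_dvd_Ico_le_of_dvd {D c : ℕ} (hc : D ∣ c) (a L : ℕ) :
    #{x ∈ Ico a (a + L) | D ∣ x} ≤ #{x ∈ Ico c (c + L) | D ∣ x} := by
  set S := {x ∈ Ico a (a + L) | D ∣ x}
  rcases S.eq_empty_or_nonempty with hS | hS
  · simp [hS]
  obtain ⟨x₀, hx₀, hx₀_le⟩ : ∃ x₀ ∈ S, ∀ x ∈ S, x₀ ≤ x :=
    ⟨S.min' hS, min'_mem S hS, fun x hx => min'_le S x hx⟩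
  simp only [S, mem_filter, mem_Ico] at hx₀
  -- translate the multiples in the first window so that the least one lands on `c`
  refine card_le_card_of_injOn (fun x => x - x₀ + c) (fun x hx => ?_)
    fun x hx y hy hxy => ?_
  · have := hx₀_le x hx
    simp only [S, coe_filter, Set.mem_ofPred_eq, mem_Ico] at hx ⊢
    exact ⟨⟨by omega, by omega⟩, (Nat.dvd_sub hx.2 hx₀.2).add hc⟩
  · have := hx₀_le x hx
    have := hx₀_le y hy
    simp only at hxy
    omega

theorem card_filter_dvd_Ico_le_of_le {D a b c d : ℕ} (ha : 0 < a) (hcD : c ≤ D) (hbd : b ≤ d) :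
    #{x ∈ Ico a b | D ∣ x} ≤ #{x ∈ Ico c d | D ∣ x} := by
  refine card_le_card fun x hx => ?_
  simp only [mem_filter, mem_Ico] at hx ⊢
  have := Nat.le_of_dvd (by omega) hx.2
  exact ⟨⟨by omega, by omega⟩, hx.2⟩

theorem filter_le_padicValNat_Ico {p : ℕ} [Fact p.Prime] {a : ℕ} (ha : 0 < a) (b k : ℕ) :
    {x ∈ Ico a b | k ≤ padicValNat p x} = {x ∈ Ico a b | p ^ k ∣ x} :=
  filter_congr fun _ hx => (padicValNat_dvd_iff_le (ha.trans_le (mem_Ico.mp hx).1).ne').symm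

theorem padicValNat_add_mul_pow {p : ℕ} [Fact p.Prime] {r s : ℕ} (hr : 0 < r) (hrs : r < p ^ s)
    (t : ℕ) : padicValNat p (r + t * p ^ s) = padicValNat p r := by
  refine eq_of_forall_le_iff fun k => ?_
  rw [← padicValNat_dvd_iff_le (by positivity), ← padicValNat_dvd_iff_le hr.ne']
  rcases le_total k s with hks | hsk
  · exact Nat.dvd_add_left ((pow_dvd_pow p hks).mul_left t)
  · have hnot : ¬ p ^ s ∣ r := Nat.not_dvd_of_pos_of_lt hr hrs
    refine ⟨fun h => absurd ?_ hnot, fun h => absurd ((pow_dvd_pow p hsk).trans h) hnot⟩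
    exact (Nat.dvd_add_left (dvd_mul_left _ _)).mp ((pow_dvd_pow p hsk).trans h)

theorem gapSum_add_mul_two_pow (α : ℝ) {a L s : ℕ} (ha : 0 < a) (haL : a + L ≤ 2 ^ s) (t : ℕ) :
    gapSum α (a + t * 2 ^ s) L = gapSum α a L := by
  rw [gapSum, gapSum, add_right_comm, ← sum_Ico_add']
  refine sum_congr rfl fun x hx => ?_
  rw [mem_Ico] at hx
  rw [gapSeq, gapSeq, padicValNat_add_mul_pow (by omega) (by omega)]

theorem gapSum_le_gapSum_two_pow {α : ℝ} (hα0 : 0 < α) (hα1 : α ≤ 1) {a : ℕ} (m L : ℕ)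
    (ha : 0 < a) (ham : a ≤ 2 ^ m) : gapSum α a L ≤ gapSum α (2 ^ m) L := by
  refine sum_comp_le_sum_comp_of_card_filter_le (f := padicValNat 2) (g := (α⁻¹ ^ ·))
    (pow_right_mono₀ ((one_le_inv₀ hα0).2 hα1)) zero_le_one fun k => ?_
  rw [filter_le_padicValNat_Ico ha, filter_le_padicValNat_Ico (by positivity)]
  rcases le_total k m with hkm | hmk
  · exact card_filter_dvd_Ico_le_of_dvd (pow_dvd_pow 2 hkm) a L
  · exact card_filter_dvd_Ico_le_of_le ha (Nat.pow_le_pow_right two_pos hmk) (by omega)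

theorem stmt16_general (α : ℝ) (hα1 : 0 < α) (hα2 : α < 1 / 2) (m s t h n : ℕ)
    (hn1 : 2 ^ m < n) (hn2 : n ≤ 2 ^ s) (hh : h < 2 ^ m) :
    gapSum α (2 ^ m + t * 2 ^ s - h) (n - 2 ^ m) ≤ gapSum α (2 ^ m) (n - 2 ^ m) := by
  rw [show 2 ^ m + t * 2 ^ s - h = 2 ^ m - h + t * 2 ^ s by omega,
    gapSum_add_mul_two_pow α (by omega) (by omega)]
  exact gapSum_le_gapSum_two_pow hα1 (by linarith) m _ (by omega) (by omega)

/-- For `m ≥ 0`, `s > m`, `t ≥ 0`, `2^m < n ≤ 2^s`, `0 ≤ h < 2^m`: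
`A(2^m, n − 2^m) ≥ A(2^m + t·2^s − h, n − 2^m)`. -/
theorem stmt16 (α : ℝ) (hα1 : 0 < α) (hα2 : α < 1 / 2) (m s t h n : ℕ)
    (hms : m < s) (hn1 : 2 ^ m < n) (hn2 : n ≤ 2 ^ s) (hh : h < 2 ^ m) :
    gapSum α (2 ^ m + t * 2 ^ s - h) (n - 2 ^ m) ≤ gapSum α (2 ^ m) (n - 2 ^ m) :=
  stmt16_general α hα1 hα2 m s t h n hn1 hn2 hh
end

section
/- For u, v ∈ Σ^k with γ(u) ≤ γ(v): ρ(u,v) = (γ(v) − γ(u))·α^k + α^{k−1}(1 − 2α)·Σ_{i=γ(u)}^{γ(v)−1} a_i, where (a_i) is the gap sequence with a_{2^j(2m+1)} = (1/α)^j. -/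
/-- `γ(u_1…u_k) = 1 + Σ_{i=1}^k u_i 2^{k-i}`. -/
def gammaW {k : ℕ} (u : Fin k → Bool) : ℕ :=
  1 + ∑ i : Fin k, (if u i then 2 ^ (k - 1 - (i : ℕ)) else 0)

open Finset

theorem gapSeq_nonneg {α : ℝ} (hα : 0 ≤ α) (i : ℕ) : 0 ≤ gapSeq α i := by
  unfold gapSeq; positivity

theorem gapSeq_two_mul_add_one (α : ℝ) (m : ℕ) : gapSeq α (2 * m + 1) = 1 := by
  rw [gapSeq, padicValNat.eq_zero_of_not_dvd (by omega), pow_zero]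

theorem gapSeq_two_mul (α : ℝ) {m : ℕ} (hm : m ≠ 0) : gapSeq α (2 * m) = α⁻¹ * gapSeq α m := by
  rw [gapSeq, gapSeq, padicValNat.mul two_ne_zero hm, padicValNat.self one_lt_two, pow_add, pow_one]

/-- `κ` of the length-`k` binary expansion of `n`, most significant digit first: the word `u`
with `γ(u) = n + 1`. -/
noncomputable def kappaNat (α : ℝ) : ℕ → ℕ → ℝ
  | 0, _ => 0
  | k + 1, n => kappaNat α k (n / 2) + if n % 2 = 1 then (1 - α) * α ^ k else 0

theorem kappaNat_two_mul (α : ℝ) (k m : ℕ) : kappaNat α (k + 1) (2 * m) = kappaNat α k m := by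
  simp [kappaNat]

theorem kappaNat_two_mul_add_one (α : ℝ) (k m : ℕ) :
    kappaNat α (k + 1) (2 * m + 1) = kappaNat α k m + (1 - α) * α ^ k := by
  simp [kappaNat, Nat.mul_add_div]

theorem kappaNat_succ_sub {α : ℝ} (hα : α ≠ 0) {k n : ℕ} (hn : n + 1 < 2 ^ k) :
    kappaNat α k (n + 1) - kappaNat α k n =
      α ^ k + α ^ (k - 1) * (1 - 2 * α) * gapSeq α (n + 1) := by
  induction k generalizing n with
  | zero => simp at hn
  | succ k ih =>
    obtain ⟨m, rfl | rfl⟩ := Nat.even_or_odd' n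
    · rw [kappaNat_two_mul_add_one, kappaNat_two_mul, gapSeq_two_mul_add_one, Nat.add_sub_cancel]
      ring
    · have hm : m + 1 < 2 ^ k := by rw [pow_succ] at hn; omega
      obtain ⟨j, rfl⟩ : ∃ j, k = j + 1 := Nat.exists_eq_succ_of_ne_zero (by rintro rfl; simp at hm)
      have hstep := ih hm
      rw [show 2 * m + 1 + 1 = 2 * (m + 1) by ring, kappaNat_two_mul, kappaNat_two_mul_add_one,
        gapSeq_two_mul α m.succ_ne_zero]
      have hinv : α ^ (j + 1) * α⁻¹ = α ^ j := by rw [pow_succ, mul_inv_cancel_right₀ hα]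
      simp only [Nat.add_sub_cancel] at hstep ⊢
      linear_combination hstep - (1 - 2 * α) * gapSeq α (m + 1) * hinv

theorem kfin_snoc (α : ℝ) {k : ℕ} (w : Fin k → Bool) (b : Bool) :
    kfin α (Fin.snoc w b : Fin (k + 1) → Bool) = kfin α w + (1 - α) * if b then α ^ k else 0 := by
  simp only [kfin, Fin.sum_univ_castSucc, Fin.snoc_castSucc, Fin.snoc_last, Fin.val_castSucc,
    Fin.val_last]
  ring

theorem gammaW_snoc {k : ℕ} (w : Fin k → Bool) (b : Bool) :
    gammaW (Fin.snoc w b : Fin (k + 1) → Bool) + 1 = 2 * gammaW w + if b then 1 else 0 := by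
  have hterm : ∀ i : Fin k, (if w i then 2 ^ (k + 1 - 1 - (i : ℕ)) else 0) =
      2 * if w i then 2 ^ (k - 1 - (i : ℕ)) else 0 := by
    intro i
    rw [show k + 1 - 1 - (i : ℕ) = k - 1 - i + 1 by omega, pow_succ]
    split_ifs <;> ring
  simp only [gammaW, Fin.sum_univ_castSucc, Fin.snoc_castSucc, Fin.snoc_last, Fin.val_castSucc,
    Fin.val_last, hterm, ← mul_sum, show k + 1 - 1 - k = 0 by omega, pow_zero]
  split_ifs <;> ring

theorem one_le_gammaW {k : ℕ} (u : Fin k → Bool) : 1 ≤ gammaW u := by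
  unfold gammaW; omega

theorem gammaW_le_two_pow {k : ℕ} (u : Fin k → Bool) : gammaW u ≤ 2 ^ k := by
  induction k with
  | zero => simp [gammaW]
  | succ k ih =>
    have h := gammaW_snoc (Fin.init u) (u (Fin.last k))
    rw [Fin.snoc_init_self] at h
    have := ih (Fin.init u)
    rw [pow_succ]
    split_ifs at h <;> omega

theorem kfin_eq_kappaNat (α : ℝ) {k : ℕ} (u : Fin k → Bool) :
    kfin α u = kappaNat α k (gammaW u - 1) := by
  induction k with
  | zero => simp [kfin, kappaNat]
  | succ k ih =>
    obtain ⟨w, b, rfl⟩ : ∃ w b, u = Fin.snoc w b := ⟨_, _, (Fin.snoc_init_self u).symm⟩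
    have hγ := gammaW_snoc w b
    have hpos := one_le_gammaW w
    rw [kfin_snoc, ih]
    cases b
    · rw [show gammaW (Fin.snoc w false : Fin (k + 1) → Bool) - 1 = 2 * (gammaW w - 1) by
        simp only [Bool.false_eq_true, ↓reduceIte, add_zero] at hγ; omega, kappaNat_two_mul]
      simp
    · rw [show gammaW (Fin.snoc w true : Fin (k + 1) → Bool) - 1 = 2 * (gammaW w - 1) + 1 by
        simp only [↓reduceIte] at hγ; omega, kappaNat_two_mul_add_one]
      simp

theorem kfin_sub_kfin {α : ℝ} (hα : α ≠ 0) {k : ℕ} {u v : Fin k → Bool}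
    (huv : gammaW u ≤ gammaW v) :
    kfin α v - kfin α u =
      ∑ i ∈ Ico (gammaW u) (gammaW v), (α ^ k + α ^ (k - 1) * (1 - 2 * α) * gapSeq α i) := by
  obtain ⟨m, hm⟩ := Nat.exists_eq_add_of_le' (one_le_gammaW u)
  obtain ⟨n, hn⟩ := Nat.exists_eq_add_of_le' (one_le_gammaW v)
  have hn_lt : n < 2 ^ k := by have := gammaW_le_two_pow v; omega
  rw [kfin_eq_kappaNat, kfin_eq_kappaNat, hm, hn, Nat.add_sub_cancel, Nat.add_sub_cancel,
    ← sum_Ico_add', ← sum_Ico_sub (f := kappaNat α k) (by omega)]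
  refine sum_congr rfl fun i hi => kappaNat_succ_sub hα ?_
  have := (mem_Ico.1 hi).2
  omega

theorem stmt17_general (α : ℝ) (hα1 : 0 < α) (hα2 : α < 1 / 2) (k : ℕ)
    (u v : Fin k → Bool) (huv : gammaW u ≤ gammaW v) :
    rhoW α u v = ((gammaW v : ℝ) - (gammaW u : ℝ)) * α ^ k +
      α ^ (k - 1) * (1 - 2 * α) * ∑ i ∈ Finset.Ico (gammaW u) (gammaW v), gapSeq α i := by
  have hstep_nonneg (i : ℕ) : 0 ≤ α ^ k + α ^ (k - 1) * (1 - 2 * α) * gapSeq α i := by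
    have := gapSeq_nonneg hα1.le i
    have : 0 ≤ 1 - 2 * α := by linarith
    positivity
  have hdiff := kfin_sub_kfin hα1.ne' huv
  rw [rhoW, abs_sub_comm, abs_of_nonneg (hdiff ▸ sum_nonneg fun i _ => hstep_nonneg i), hdiff,
    sum_add_distrib, sum_const, Nat.card_Ico, nsmul_eq_mul, Nat.cast_sub huv, ← mul_sum]

/-- For `u, v ∈ Σ^k` with `γ(u) ≤ γ(v)`:
`ρ(u,v) = (γ(v) − γ(u))·α^k + α^{k−1}(1 − 2α)·Σ_{i=γ(u)}^{γ(v)−1} a_i`. -/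
theorem stmt17 (α : ℝ) (hα1 : 0 < α) (hα2 : α < 1 / 2) (k : ℕ) (hk : 1 ≤ k)
    (u v : Fin k → Bool) (huv : gammaW u ≤ gammaW v) :
    rhoW α u v = ((gammaW v : ℝ) - (gammaW u : ℝ)) * α ^ k +
      α ^ (k - 1) * (1 - 2 * α) * ∑ i ∈ Finset.Ico (gammaW u) (gammaW v), gapSeq α i :=
  stmt17_general α hα1 hα2 k u v huv
end
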